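/- arXiv:2401.06487 — 3 statements merged into one kernel-verified Lean document; each statement's English description precedes it below -/
import Mathlib

section
/- Let R_n be the star graph with n rays of length 2, i.e., the tree with a center vertex u, vertices v_1,...,v_n adjacent to u, and vertices w_1,...,w_n with w_i adjacent only to v_i. Then the independence complex I(R_n) is homotopy equivalent to the sphere S^{n-1}. -/
open scoped Classical

noncomputable section

/-- An abstract simplicial complex on a vertex type `V`, given by a downward closed
collection of finite subsets of `V` (the simplices). -/
structure ACx (V : Type) where
  faces : Set (Finset V)
  down_closed : ∀ ⦃s t : Finset V⦄, s ∈ faces → t ⊆ s → t ∈ faces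

/-- The independence complex `I(G)` of a simple graph `G`: its simplices are the
independent sets of vertices of `G`. -/
def indepCx {V : Type} (G : SimpleGraph V) : ACx V where
  faces := {s | ∀ v ∈ s, ∀ w ∈ s, ¬ G.Adj v w}
  down_closed := fun _s _t hs hts v hv w hw => hs v (hts hv) w (hts hw)

/-- The support of a function `f : V → ℝ`, as a finset. -/
def suppF {V : Type} [Fintype V] (f : V → ℝ) : Finset V :=
  Finset.univ.filter fun v => f v ≠ 0

/-- The geometric realization of an abstract simplicial complex, as the set of
convex-combination (barycentric coordinate) functions supported on a simplex. -/
def ACx.geomSet {V : Type} [Fintype V] (K : ACx V) : Set (V → ℝ) :=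
  {f | (∀ v, 0 ≤ f v) ∧ (∑ v, f v) = 1 ∧ suppF f ∈ K.faces}

/-- The geometric realization of an abstract simplicial complex, as a topological space
(a subspace of `ℝ^V`). -/
def ACx.geom {V : Type} [Fintype V] (K : ACx V) : Type := K.geomSet

instance {V : Type} [Fintype V] (K : ACx V) : TopologicalSpace K.geom :=
  inferInstanceAs (TopologicalSpace ↥(K.geomSet))

/-- A model for the sphere S^{n-1}: the unit sphere in ℝ^n.  In particular `sph 0` is
the empty space S^{-1}, and `sph (k)` is the (k-1)-dimensional sphere. -/
def sph (n : ℕ) : Type := Metric.sphere (0 : EuclideanSpace ℝ (Fin n)) 1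

instance (n : ℕ) : TopologicalSpace (sph n) :=
  inferInstanceAs (TopologicalSpace ↥(Metric.sphere (0 : EuclideanSpace ℝ (Fin n)) 1))

/-- A base point of the sphere `sph n` (for `n > 0`). -/
def sphPt (n : ℕ) (h : 0 < n) : sph n :=
  ⟨EuclideanSpace.single (⟨0, h⟩ : Fin n) (1 : ℝ), by
    simp [EuclideanSpace.norm_single]⟩

/-- Wedge (one point union) of two pointed topological spaces. -/
def Wedge {X Y : Type} [TopologicalSpace X] [TopologicalSpace Y] (x₀ : X) (y₀ : Y) : Type :=
  Quot fun a b : X ⊕ Y => a = Sum.inl x₀ ∧ b = Sum.inr y₀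

instance {X Y : Type} [TopologicalSpace X] [TopologicalSpace Y] (x₀ : X) (y₀ : Y) :
    TopologicalSpace (Wedge x₀ y₀) :=
  inferInstanceAs (TopologicalSpace (Quot _))

/-- The join `K * L` of two abstract simplicial complexes, on the disjoint union of the
vertex sets; its simplices are the (disjoint) unions of a simplex of `K` and a simplex of `L`. -/
def joinCx {V W : Type} (K : ACx V) (L : ACx W) : ACx (V ⊕ W) where
  faces := {s | s.toLeft ∈ K.faces ∧ s.toRight ∈ L.faces}
  down_closed := fun _s _t hs hts =>
    ⟨K.down_closed hs.1 (fun a ha => Finset.mem_toLeft.2 (hts (Finset.mem_toLeft.1 ha))),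
     L.down_closed hs.2 (fun a ha => Finset.mem_toRight.2 (hts (Finset.mem_toRight.1 ha)))⟩

/-- The complex `S^0` consisting of two disjoint points. -/
def twoPtCx : ACx Bool where
  faces := {s | s.card ≤ 1}
  down_closed := fun _s _t hs hts => le_trans (Finset.card_le_card hts) hs

/-- The suspension `Σ K = K * S^0` of an abstract simplicial complex. -/
def suspCx {V : Type} (K : ACx V) : ACx (V ⊕ Bool) := joinCx K twoPtCx

/-- The point of the geometric realization corresponding to a vertex `w`. -/
def vertexPoint {V : Type} [Fintype V] (K : ACx V) (w : V) (h : ({w} : Finset V) ∈ K.faces) :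
    K.geom :=
  ⟨fun v => if v = w then 1 else 0,
    fun v => by dsimp only; split <;> norm_num,
    by simp,
    by
      have hs : suppF (fun v : V => if v = w then (1 : ℝ) else 0) = {w} := by
        ext v
        by_cases hv : v = w <;> simp [suppF, hv]
      rw [hs]; exact h⟩

/-- The empty set is a simplex of any independence complex. -/
theorem indepCx_empty_mem {V : Type} (G : SimpleGraph V) : (∅ : Finset V) ∈ (indepCx G).faces :=
  fun v hv => absurd hv (Finset.notMem_empty v)

/-- A singleton is always a simplex of the independence complex. -/
theorem indepCx_singleton_mem {V : Type} (G : SimpleGraph V) (w : V) :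
    ({w} : Finset V) ∈ (indepCx G).faces := by
  intro a ha b hb
  rw [Finset.mem_singleton] at ha hb
  subst ha; subst hb
  exact G.irrefl

/-- A canonical point of the realization of a suspension: the north pole. -/
def northPole {V : Type} [Fintype V] (K : ACx V) (h : (∅ : Finset V) ∈ K.faces) :
    (suspCx K).geom :=
  vertexPoint (suspCx K) (Sum.inr true)
    ⟨by
      have ht : ({Sum.inr true} : Finset (V ⊕ Bool)).toLeft = ∅ := by
        ext a; simp
      rw [ht]; exact h,
     by
      have ht : ({Sum.inr true} : Finset (V ⊕ Bool)).toRight = {true} := by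
        ext a; simp
      rw [ht]
      show ({true} : Finset Bool).card ≤ 1
      simp⟩


/-- The star graph `R_n` with `n` rays of length 2: a center `u` (the `Sum.inl` vertex),
vertices `v i` adjacent to `u`, and vertices `w i` with `w i` adjacent only to `v i`. -/
def starGraph (n : ℕ) : SimpleGraph (Unit ⊕ (Fin n ⊕ Fin n)) :=
  SimpleGraph.fromRel fun a b =>
    (∃ i : Fin n, a = Sum.inl () ∧ b = Sum.inr (Sum.inl i)) ∨
    (∃ i : Fin n, a = Sum.inr (Sum.inl i) ∧ b = Sum.inr (Sum.inr i))

namespace StarAux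

abbrev Vt (n : ℕ) : Type := Unit ⊕ (Fin n ⊕ Fin n)

def uu (n : ℕ) : Vt n := Sum.inl ()
def vv {n : ℕ} (i : Fin n) : Vt n := Sum.inr (Sum.inl i)
def ww {n : ℕ} (i : Fin n) : Vt n := Sum.inr (Sum.inr i)

variable {n : ℕ}

lemma sum_V (f : Vt n → ℝ) :
    ∑ a, f a = f (uu n) + ((∑ i, f (vv i)) + (∑ i, f (ww i))) := by
  rw [Fintype.sum_sum_type, Fintype.sum_sum_type]
  simp [uu, vv, ww, add_assoc]

lemma adj_uv (i : Fin n) : (starGraph n).Adj (uu n) (vv i) := by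
  rw [starGraph, SimpleGraph.fromRel_adj]
  exact ⟨by simp [uu, vv], Or.inl (Or.inl ⟨i, rfl, rfl⟩)⟩

lemma adj_vw (i : Fin n) : (starGraph n).Adj (vv i) (ww i) := by
  rw [starGraph, SimpleGraph.fromRel_adj]
  exact ⟨by simp [ww, vv], Or.inl (Or.inr ⟨i, rfl, rfl⟩)⟩

lemma mem_suppF {x : Vt n → ℝ} {a : Vt n} : a ∈ suppF x ↔ x a ≠ 0 := by
  simp [suppF]

lemma fact_v {x : Vt n → ℝ} (hx : x ∈ (indepCx (starGraph n)).geomSet)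
    (hu : x (uu n) ≠ 0) (i : Fin n) : x (vv i) = 0 := by
  by_contra h
  exact hx.2.2 _ (mem_suppF.2 hu) _ (mem_suppF.2 h) (adj_uv i)

lemma fact_vw {x : Vt n → ℝ} (hx : x ∈ (indepCx (starGraph n)).geomSet)
    {i : Fin n} (hv : x (vv i) ≠ 0) : x (ww i) = 0 := by
  by_contra h
  exact hx.2.2 _ (mem_suppF.2 hv) _ (mem_suppF.2 h) (adj_vw i)

/-- coordinates of the retracted point, pushed to the `ℓ¹`-like description -/
def phi (n : ℕ) (x : Vt n → ℝ) (i : Fin n) : ℝ :=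
  x (vv i) - x (ww i) - x (uu n) / n

lemma abs_split (a : ℝ) : |a| = max a 0 + max (-a) 0 := by
  rcases le_total 0 a with h | h
  · rw [abs_of_nonneg h, max_eq_left h, max_eq_right (by linarith), add_zero]
  · rw [abs_of_nonpos h, max_eq_right h, max_eq_left (by linarith), zero_add]

lemma max_sub_max (a : ℝ) : max a 0 - max (-a) 0 = a := by
  rcases le_total 0 a with h | h
  · rw [max_eq_left h, max_eq_right (by linarith)]; ring
  · rw [max_eq_right h, max_eq_left (by linarith)]; ring

lemma phi_pos {x : Vt n → ℝ} (hx : x ∈ (indepCx (starGraph n)).geomSet) (i : Fin n) :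
    max (phi n x i) 0 = x (vv i) := by
  have hwn : 0 ≤ x (ww i) := hx.1 (ww i)
  have hvn : 0 ≤ x (vv i) := hx.1 (vv i)
  have hun : 0 ≤ x (uu n) / n := div_nonneg (hx.1 (uu n)) (Nat.cast_nonneg n)
  by_cases hu : x (uu n) = 0
  · by_cases hv : x (vv i) = 0
    · rw [max_eq_right]
      · exact hv.symm
      · simp only [phi, hu, hv, zero_div, sub_zero, zero_sub]; linarith
    · have hw := fact_vw hx hv
      rw [max_eq_left]
      · simp only [phi, hu, hw, zero_div, sub_zero]
      · simp only [phi, hu, hw, zero_div, sub_zero]; linarith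
  · have hv := fact_v hx hu i
    rw [max_eq_right]
    · exact hv.symm
    · simp only [phi, hv, zero_sub]; linarith

lemma phi_neg {x : Vt n → ℝ} (hx : x ∈ (indepCx (starGraph n)).geomSet) (i : Fin n) :
    max (-(phi n x i)) 0 = x (ww i) + x (uu n) / n := by
  have hwn : 0 ≤ x (ww i) := hx.1 (ww i)
  have hvn : 0 ≤ x (vv i) := hx.1 (vv i)
  have hun : 0 ≤ x (uu n) / n := div_nonneg (hx.1 (uu n)) (Nat.cast_nonneg n)
  by_cases hu : x (uu n) = 0
  · by_cases hv : x (vv i) = 0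
    · rw [max_eq_left]
      · simp only [phi, hu, hv, zero_div, sub_zero, zero_sub, neg_neg, add_zero]
      · simp only [phi, hu, hv, zero_div, sub_zero, zero_sub, neg_neg]; linarith
    · have hw := fact_vw hx hv
      rw [max_eq_right]
      · simp [hw, hu]
      · simp only [phi, hu, hw, zero_div, sub_zero]; linarith
  · have hv := fact_v hx hu i
    rw [max_eq_left]
    · simp only [phi, hv]; ring
    · simp only [phi, hv, zero_sub]; linarith

lemma abs_phi {x : Vt n → ℝ} (hx : x ∈ (indepCx (starGraph n)).geomSet) (i : Fin n) :
    |phi n x i| = x (vv i) + (x (ww i) + x (uu n) / n) := by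
  rw [abs_split, phi_pos hx, phi_neg hx]

lemma sum_abs_phi (hn : 0 < n) {x : Vt n → ℝ}
    (hx : x ∈ (indepCx (starGraph n)).geomSet) :
    ∑ i, |phi n x i| = 1 := by
  have h1 := hx.2.1
  rw [sum_V] at h1
  have hn' : (n : ℝ) ≠ 0 := Nat.cast_ne_zero.2 hn.ne'
  calc ∑ i, |phi n x i| = ∑ i, (x (vv i) + (x (ww i) + x (uu n) / n)) :=
        Finset.sum_congr rfl fun i _ => abs_phi hx i
    _ = (∑ i, x (vv i)) + ((∑ i, x (ww i)) + ∑ _i : Fin n, x (uu n) / n) := by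
        rw [Finset.sum_add_distrib, Finset.sum_add_distrib]
    _ = 1 := by
        rw [Finset.sum_const, Finset.card_univ, Fintype.card_fin, nsmul_eq_mul,
          mul_div_cancel₀ _ hn']
        linarith

def Phi (n : ℕ) (x : Vt n → ℝ) : EuclideanSpace ℝ (Fin n) :=
  (WithLp.equiv 2 (Fin n → ℝ)).symm (phi n x)

lemma Phi_ne_zero (hn : 0 < n) {x : Vt n → ℝ}
    (hx : x ∈ (indepCx (starGraph n)).geomSet) : Phi n x ≠ 0 := by
  intro h
  have h2 : phi n x = 0 := by
    have := congrArg (WithLp.equiv 2 (Fin n → ℝ)) h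
    simpa [Phi] using this
  have := sum_abs_phi hn hx
  rw [h2] at this
  simp at this

lemma Phi_apply (x : Vt n → ℝ) (i : Fin n) : Phi n x i = phi n x i := rfl

/-- the forward map -/
def Fmap (n : ℕ) (hn : 0 < n) (x : (indepCx (starGraph n)).geom) : sph n :=
  ⟨‖Phi n x.val‖⁻¹ • Phi n x.val, by
    have h0 : ‖Phi n x.val‖ ≠ 0 := norm_ne_zero_iff.2 (Phi_ne_zero hn x.2)
    rw [mem_sphere_zero_iff_norm, norm_smul, norm_inv, norm_norm,
      inv_mul_cancel₀ h0]⟩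

def sfun (n : ℕ) (z : EuclideanSpace ℝ (Fin n)) : ℝ := ∑ i, |z i|

lemma sfun_pos {z : EuclideanSpace ℝ (Fin n)} (hz : z ≠ 0) : 0 < sfun n z := by
  have : ∃ i, z i ≠ 0 := by
    by_contra h
    push_neg at h
    exact hz (by ext i; simpa using h i)
  obtain ⟨i, hi⟩ := this
  exact Finset.sum_pos' (fun j _ => abs_nonneg _) ⟨i, Finset.mem_univ i, abs_pos.2 hi⟩

def Gfun (n : ℕ) (z : EuclideanSpace ℝ (Fin n)) : Vt n → ℝ := fun a =>
  match a with
  | Sum.inl _ => 0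
  | Sum.inr (Sum.inl i) => max (z i) 0 / sfun n z
  | Sum.inr (Sum.inr i) => max (-(z i)) 0 / sfun n z

lemma Gfun_mem {z : EuclideanSpace ℝ (Fin n)}
    (hz : z ∈ Metric.sphere (0 : EuclideanSpace ℝ (Fin n)) 1) :
    Gfun n z ∈ (indepCx (starGraph n)).geomSet := by
  have hz0 : z ≠ 0 := by
    intro h
    rw [mem_sphere_zero_iff_norm, h] at hz
    simp at hz
  have hs := sfun_pos (n := n) hz0
  refine ⟨?_, ?_, ?_⟩
  · rintro (a | a | a)
    · exact le_refl 0
    · exact div_nonneg (le_max_right _ _) hs.le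
    · exact div_nonneg (le_max_right _ _) hs.le
  · rw [sum_V]
    have h1 : ∀ i : Fin n, Gfun n z (vv i) = max (z i) 0 / sfun n z := fun i => rfl
    have h2 : ∀ i : Fin n, Gfun n z (ww i) = max (-(z i)) 0 / sfun n z := fun i => rfl
    have h0 : Gfun n z (uu n) = 0 := rfl
    rw [h0]
    simp only [h1, h2]
    rw [← Finset.sum_add_distrib]
    have : ∀ i : Fin n, max (z i) 0 / sfun n z + max (-(z i)) 0 / sfun n z
        = |z i| / sfun n z := fun i => by rw [← add_div, ← abs_split]
    rw [Finset.sum_congr rfl fun i _ => this i, ← Finset.sum_div]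
    rw [show (∑ i, |z i|) = sfun n z from rfl, div_self hs.ne']
    ring
  · intro a ha b hb hadj
    rw [starGraph, SimpleGraph.fromRel_adj] at hadj
    have key : ∀ i : Fin n, ¬((uu n) ∈ suppF (Gfun n z)) := by
      intro i h
      exact mem_suppF.1 h rfl
    have keyvw : ∀ i : Fin n, vv i ∈ suppF (Gfun n z) → ww i ∈ suppF (Gfun n z) → False := by
      intro i h1 h2
      have e1 : max (z i) 0 / sfun n z ≠ 0 := mem_suppF.1 h1
      have e2 : max (-(z i)) 0 / sfun n z ≠ 0 := mem_suppF.1 h2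
      have p1 : 0 < max (z i) 0 :=
        lt_of_le_of_ne (le_max_right _ _) (by
          intro h; exact e1 (by rw [← h, zero_div]))
      have p2 : 0 < max (-(z i)) 0 :=
        lt_of_le_of_ne (le_max_right _ _) (by
          intro h; exact e2 (by rw [← h, zero_div]))
      have q1 : 0 < z i := by rcases lt_max_iff.1 p1 with h | h; exact h; exact absurd h (lt_irrefl 0)
      have q2 : 0 < -(z i) := by rcases lt_max_iff.1 p2 with h | h; exact h; exact absurd h (lt_irrefl 0)
      linarith
    obtain ⟨hne, h | h⟩ := hadj
    · rcases h with ⟨i, rfl, rfl⟩ | ⟨i, rfl, rfl⟩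
      · exact key i ha
      · exact keyvw i ha hb
    · rcases h with ⟨i, rfl, rfl⟩ | ⟨i, rfl, rfl⟩
      · exact key i hb
      · exact keyvw i hb ha

def Gmap (n : ℕ) (z : sph n) : (indepCx (starGraph n)).geom :=
  ⟨Gfun n z.val, Gfun_mem z.2⟩

/-- the straight-line retraction family -/
def ret (n : ℕ) (t : ℝ) (x : Vt n → ℝ) : Vt n → ℝ := fun a =>
  match a with
  | Sum.inl _ => t * x (uu n)
  | Sum.inr (Sum.inl i) => x (vv i)
  | Sum.inr (Sum.inr i) => x (ww i) + (1 - t) * x (uu n) / n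

lemma ret_one (x : Vt n → ℝ) : ret n 1 x = x := by
  funext a
  rcases a with a | a | a
  · show 1 * x (uu n) = x (Sum.inl a)
    rw [one_mul]; rfl
  · rfl
  · show x (ww a) + (1 - 1) * x (uu n) / n = _
    rw [sub_self, zero_mul, zero_div, add_zero]
    rfl

lemma ret_mem (hn : 0 < n) {x : Vt n → ℝ} (hx : x ∈ (indepCx (starGraph n)).geomSet)
    {t : ℝ} (ht0 : 0 ≤ t) (ht1 : t ≤ 1) : ret n t x ∈ (indepCx (starGraph n)).geomSet := by
  have hu0 := hx.1 (uu n)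
  have hn' : (n : ℝ) ≠ 0 := Nat.cast_ne_zero.2 hn.ne'
  refine ⟨?_, ?_, ?_⟩
  · rintro (a | a | a)
    · exact mul_nonneg ht0 hu0
    · exact hx.1 (vv a)
    · have := hx.1 (ww a)
      have h2 : 0 ≤ (1 - t) * x (uu n) / n :=
        div_nonneg (mul_nonneg (by linarith) hu0) (Nat.cast_nonneg n)
      show 0 ≤ x (ww a) + (1 - t) * x (uu n) / n
      linarith
  · have h1 := hx.2.1
    rw [sum_V] at h1
    rw [sum_V]
    have h0 : ret n t x (uu n) = t * x (uu n) := rfl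
    have hv : ∀ i : Fin n, ret n t x (vv i) = x (vv i) := fun i => rfl
    have hw : ∀ i : Fin n, ret n t x (ww i) = x (ww i) + (1 - t) * x (uu n) / n :=
      fun i => rfl
    rw [h0]
    simp only [hv, hw]
    rw [Finset.sum_add_distrib, Finset.sum_const, Finset.card_univ, Fintype.card_fin,
      nsmul_eq_mul, mul_div_cancel₀ _ hn']
    linarith
  · intro a ha b hb hadj
    rw [starGraph, SimpleGraph.fromRel_adj] at hadj
    have keyuv : ∀ i : Fin n, uu n ∈ suppF (ret n t x) → vv i ∈ suppF (ret n t x) → False := by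
      intro i h1 h2
      have e1 : t * x (uu n) ≠ 0 := (mem_suppF (x := ret n t x)).1 h1
      have e2 : x (vv i) ≠ 0 := (mem_suppF (x := ret n t x)).1 h2
      have : x (uu n) ≠ 0 := fun h => e1 (by rw [h, mul_zero])
      exact e2 (fact_v hx this i)
    have keyvw : ∀ i : Fin n, vv i ∈ suppF (ret n t x) → ww i ∈ suppF (ret n t x) → False := by
      intro i h1 h2
      have e1 : x (vv i) ≠ 0 := (mem_suppF (x := ret n t x)).1 h1
      have e2 : x (ww i) + (1 - t) * x (uu n) / n ≠ 0 :=
        (mem_suppF (x := ret n t x)).1 h2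
      have hw0 : x (ww i) = 0 := fact_vw hx e1
      have hu : x (uu n) = 0 := by
        by_contra h
        exact e1 (fact_v hx h i)
      exact e2 (by rw [hw0, hu, mul_zero, zero_div, add_zero])
    obtain ⟨hne, h | h⟩ := hadj
    · rcases h with ⟨i, rfl, rfl⟩ | ⟨i, rfl, rfl⟩
      · exact keyuv i ha hb
      · exact keyvw i ha hb
    · rcases h with ⟨i, rfl, rfl⟩ | ⟨i, rfl, rfl⟩
      · exact keyuv i hb ha
      · exact keyvw i hb ha

lemma FG_eq (hn : 0 < n) (z : sph n) : Fmap n hn (Gmap n z) = z := by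
  have hz : ‖z.val‖ = 1 := mem_sphere_zero_iff_norm.1 z.2
  have hz0 : z.val ≠ 0 := fun h => by rw [h] at hz; simp at hz
  have hs := sfun_pos (n := n) hz0
  have hphi : phi n (Gfun n z.val) = fun i => (sfun n z.val)⁻¹ * z.val i := by
    funext i
    show max (z.val i) 0 / sfun n z.val - max (-(z.val i)) 0 / sfun n z.val
        - 0 / (n : ℝ) = _
    rw [zero_div, sub_zero, ← sub_div, max_sub_max, div_eq_inv_mul]
  have hPhi : Phi n (Gfun n z.val) = (sfun n z.val)⁻¹ • z.val := by
    rw [Phi, hphi]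
    rfl
  have hnorm : ‖Phi n (Gfun n z.val)‖ = (sfun n z.val)⁻¹ := by
    rw [hPhi, norm_smul, norm_inv, Real.norm_eq_abs, abs_of_pos hs, hz, mul_one]
  apply Subtype.ext
  show ‖Phi n (Gfun n z.val)‖⁻¹ • Phi n (Gfun n z.val) = z.val
  rw [hnorm, hPhi, inv_inv, smul_smul, mul_inv_cancel₀ hs.ne', one_smul]

lemma GF_eq (hn : 0 < n) (x : (indepCx (starGraph n)).geom) :
    (Gmap n (Fmap n hn x)).val = ret n 0 x.val := by
  set c : ℝ := ‖Phi n x.val‖⁻¹ with hc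
  have h0 : ‖Phi n x.val‖ ≠ 0 := norm_ne_zero_iff.2 (Phi_ne_zero hn x.2)
  have hcpos : 0 < c := by
    rw [hc]
    exact inv_pos.2 (lt_of_le_of_ne (norm_nonneg _) (Ne.symm h0))
  have happly : ∀ i : Fin n, (Fmap n hn x).val i = c * phi n x.val i := fun i => rfl
  have hsf : sfun n (Fmap n hn x).val = c := by
    show ∑ i, |(Fmap n hn x).val i| = c
    calc ∑ i, |(Fmap n hn x).val i| = ∑ i, c * |phi n x.val i| := by
          refine Finset.sum_congr rfl fun i _ => ?_
          rw [happly i, abs_mul, abs_of_pos hcpos]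
      _ = c * ∑ i, |phi n x.val i| := by rw [Finset.mul_sum]
      _ = c := by rw [sum_abs_phi hn x.2, mul_one]
  funext a
  rcases a with a | a | a
  · show (0 : ℝ) = 0 * x.val (uu n)
    rw [zero_mul]
  · show max ((Fmap n hn x).val a) 0 / sfun n (Fmap n hn x).val = x.val (vv a)
    rw [hsf, happly a]
    have hmx : max (c * phi n x.val a) 0 = c * max (phi n x.val a) 0 := by
      rw [mul_max_of_nonneg _ _ hcpos.le, mul_zero]
    rw [hmx, mul_div_cancel_left₀ _ hcpos.ne', phi_pos x.2]
  · show max (-((Fmap n hn x).val a)) 0 / sfun n (Fmap n hn x).val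
        = x.val (ww a) + (1 - 0) * x.val (uu n) / (n : ℝ)
    rw [hsf, happly a]
    have hmx : max (-(c * phi n x.val a)) 0 = c * max (-(phi n x.val a)) 0 := by
      rw [mul_max_of_nonneg _ _ hcpos.le, mul_zero, mul_neg]
    rw [hmx, mul_div_cancel_left₀ _ hcpos.ne', phi_neg x.2]
    ring

lemma sph_ne_zero (z : sph n) : (z.val : EuclideanSpace ℝ (Fin n)) ≠ 0 := by
  have hz : ‖(z.val : EuclideanSpace ℝ (Fin n))‖ = 1 := mem_sphere_zero_iff_norm.1 z.2
  intro h
  rw [h] at hz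
  simp at hz

lemma cont_val : Continuous fun x : (indepCx (starGraph n)).geom => (x.val : Vt n → ℝ) :=
  continuous_subtype_val

lemma cont_Phi : Continuous fun x : (indepCx (starGraph n)).geom => Phi n x.val := by
  apply (PiLp.continuous_toLp 2 (fun _ : Fin n => ℝ)).comp
  apply continuous_pi
  intro i
  show Continuous fun x : (indepCx (starGraph n)).geom =>
    x.val (vv i) - x.val (ww i) - x.val (uu n) / (n : ℝ)
  exact (((continuous_apply (vv i)).comp cont_val).sub
    ((continuous_apply (ww i)).comp cont_val)).sub
    (((continuous_apply (uu n)).comp cont_val).div_const _)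

lemma cont_Fmap (hn : 0 < n) : Continuous (Fmap n hn) := by
  apply Continuous.subtype_mk
  exact (cont_Phi.norm.inv₀ fun x =>
    norm_ne_zero_iff.2 (Phi_ne_zero hn x.2)).smul cont_Phi

lemma cont_coord (i : Fin n) : Continuous fun z : sph n => (z.val : EuclideanSpace ℝ (Fin n)) i :=
  (continuous_apply i).comp
    ((PiLp.continuous_ofLp 2 (fun _ : Fin n => ℝ)).comp continuous_subtype_val)

lemma cont_sfun : Continuous fun z : sph n => sfun n z.val := by
  apply continuous_finset_sum
  intro i _
  exact (cont_coord i).abs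

lemma cont_Gmap : Continuous (Gmap n) := by
  apply Continuous.subtype_mk
  apply continuous_pi
  rintro (a | a | a)
  · exact continuous_const
  · show Continuous fun z : sph n => max (z.val a) 0 / sfun n z.val
    exact ((cont_coord a).max continuous_const).div cont_sfun
      fun z => (sfun_pos (sph_ne_zero z)).ne'
  · show Continuous fun z : sph n => max (-(z.val a)) 0 / sfun n z.val
    exact ((cont_coord a).neg.max continuous_const).div cont_sfun
      fun z => (sfun_pos (sph_ne_zero z)).ne'

def Fc (n : ℕ) (hn : 0 < n) : C((indepCx (starGraph n)).geom, sph n) :=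
  ⟨Fmap n hn, cont_Fmap hn⟩

def Gc (n : ℕ) : C(sph n, (indepCx (starGraph n)).geom) :=
  ⟨Gmap n, cont_Gmap⟩

def retHomotopy (n : ℕ) (hn : 0 < n) :
    ContinuousMap.Homotopy ((Gc n).comp (Fc n hn)) (ContinuousMap.id _) where
  toFun := fun p => ⟨ret n (p.1 : ℝ) p.2.val, ret_mem hn p.2.2 p.1.2.1 p.1.2.2⟩
  continuous_toFun := by
    apply Continuous.subtype_mk
    apply continuous_pi
    have tcont : Continuous fun p : (↑unitInterval × (indepCx (starGraph n)).geom) =>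
        ((p.1 : ℝ)) := continuous_subtype_val.comp continuous_fst
    have xcont : ∀ a : Vt n, Continuous fun p : (↑unitInterval × (indepCx (starGraph n)).geom) =>
        p.2.val a := fun a => (continuous_apply a).comp (continuous_subtype_val.comp continuous_snd)
    rintro (a | a | a)
    · show Continuous fun p : (↑unitInterval × (indepCx (starGraph n)).geom) =>
        (p.1 : ℝ) * p.2.val (uu n)
      exact tcont.mul (xcont (uu n))
    · exact xcont (vv a)
    · show Continuous fun p : (↑unitInterval × (indepCx (starGraph n)).geom) =>
        p.2.val (ww a) + (1 - (p.1 : ℝ)) * p.2.val (uu n) / (n : ℝ)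
      exact (xcont (ww a)).add
        (((continuous_const.sub tcont).mul (xcont (uu n))).div_const _)
  map_zero_left := fun x => Subtype.ext (GF_eq hn x).symm
  map_one_left := fun x => Subtype.ext (ret_one x.val)

end StarAux

/-- The independence complex of the star graph `R_n` with `n` rays of
length 2 is homotopy equivalent to the sphere `S^{n-1}`
(`sph n` is the unit sphere in `ℝ^n`, i.e. `S^{n-1}`). -/
theorem indepCx_starGraph_homotopyType (n : ℕ) (hn : 0 < n) :
    Nonempty (ContinuousMap.HomotopyEquiv ((indepCx (starGraph n)).geom) (sph n)) := by
  have hFG : (StarAux.Fc n hn).comp (StarAux.Gc n) = ContinuousMap.id (sph n) :=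
    ContinuousMap.ext fun z => StarAux.FG_eq hn z
  exact ⟨⟨StarAux.Fc n hn, StarAux.Gc n, ⟨StarAux.retHomotopy n hn⟩,
    hFG ▸ ContinuousMap.Homotopic.refl _⟩⟩

end
end

section
/- For all positive integers p, q, r, the real-extreme Khovanov homology of the pretzel link P(p, q, r) is KH^{i,j̲}(P(p, q, r)) ≅ ℤ at i = -n and j̲ = p+q+r-3n-3, and is trivial at all other homological gradings at quantum grading j̲, where n is the number of negative crossings in the standard link diagram of P(p, q, r). -/
open scoped Classical

noncomputable section

/-! ## Combinatorial link diagrams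

A link diagram is modelled as a 4-valent combinatorial map: `X` is the (finite, linearly
ordered) set of crossings, and each crossing has four ends ("darts") numbered
counterclockwise by `Fin 4`.  The two strands through a crossing occupy the end-pairs
`{0,2}` and `{1,3}`, and by convention the strand occupying the odd ends `{1,3}` is the
over-strand.  `θ` is the fixed-point free involution pairing the two ends of each edge of
the diagram, and `inc d = true` records that the strand is oriented into the crossing at
the end `d` (orientations being consistent along edges and strands). -/

/-- A combinatorial model for an oriented link diagram. -/
structure Diagram where
  X : Type
  [fX : Fintype X]
  [oX : LinearOrder X]
  θ : X × Fin 4 → X × Fin 4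
  invol : ∀ d, θ (θ d) = d
  nofix : ∀ d, θ d ≠ d
  inc : X × Fin 4 → Bool
  edge_ori : ∀ d, inc (θ d) = ! inc d
  strand_ori : ∀ x : X, inc (x, 2) = ! inc (x, 0) ∧ inc (x, 3) = ! inc (x, 1)

attribute [instance] Diagram.fX Diagram.oX

/-- The darts (crossing-ends) of a diagram. -/
abbrev Diagram.Dart (D : Diagram) : Type := D.X × Fin 4

/-- The sign of a crossing, determined by the orientation: `true` = positive. -/
def Diagram.posCr (D : Diagram) (x : D.X) : Bool := D.inc (x, 0) != D.inc (x, 1)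

/-- The number of negative crossings of the oriented diagram. -/
def Diagram.nNeg (D : Diagram) : ℕ :=
  (Finset.univ.filter fun x : D.X => D.posCr x = false).card

/-- The number of positive crossings of the oriented diagram. -/
def Diagram.nPos (D : Diagram) : ℕ :=
  (Finset.univ.filter fun x : D.X => D.posCr x = true).card

/-- The writhe of the oriented diagram. -/
def Diagram.writhe (D : Diagram) : ℤ := (D.nPos : ℤ) - (D.nNeg : ℤ)

/-- `smoothStep D s d`: in the smoothing of the diagram determined by the Kauffman state
`s` (`false` = A-label, `true` = B-label), the dart at the same crossing to which the dart
`d` is connected by a smoothing arc.  The A-smoothing joins the ends `0,1` and the ends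
`2,3`; the B-smoothing joins the ends `1,2` and the ends `3,0`. -/
def smoothStep (D : Diagram) (s : D.X → Bool) (d : D.Dart) : D.Dart :=
  (d.1, if s d.1 then 3 - d.2 else if (d.2 : ℕ) % 2 = 0 then d.2 + 1 else d.2 - 1)

/-- Generating relation for the circles of the smoothed diagram `D_s`: two darts are
related if they are joined by an edge of the diagram or by a smoothing arc. -/
def circGen (D : Diagram) (s : D.X → Bool) : D.Dart → D.Dart → Prop :=
  fun a b => b = D.θ a ∨ b = smoothStep D s a

/-- The circles of the smoothed diagram `D_s`. -/
def Circles (D : Diagram) (s : D.X → Bool) : Type := Quot (circGen D s)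

instance (D : Diagram) (s : D.X → Bool) : Finite (Circles D s) := Quot.finite _

/-- The number of circles of the smoothed diagram `D_s`. -/
def nCircles (D : Diagram) (s : D.X → Bool) : ℕ := Nat.card (Circles D s)

/-- Counterclockwise rotation of the darts at each crossing. -/
def rotStep (D : Diagram) (d : D.Dart) : D.Dart := (d.1, d.2 + 1)

/-- The number of faces of the combinatorial map underlying the diagram. -/
def nFaces (D : Diagram) : ℕ := Nat.card (Quot fun a b : D.Dart => b = rotStep D (D.θ a))

/-- The number of connected components of the underlying 4-valent graph. -/
def nComps (D : Diagram) : ℕ :=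
  Nat.card (Quot fun a b : D.Dart => b = D.θ a ∨ b = rotStep D a)

/-- A combinatorial map is a genuine (planar) link diagram iff it has genus 0, i.e. the
Euler formula `V - E + F = 2 C` holds; since `E = 2 V` this reads `F = V + 2 C`. -/
def Diagram.IsPlanar (D : Diagram) : Prop := nFaces D = Fintype.card D.X + 2 * nComps D

/-! ### Standard pretzel diagrams

The ends of a crossing placed in a vertical twist region point to the bottom-left,
bottom-right, top-right and top-left; which of the four `Fin 4` labels sits in which
position depends on the sign `h` of the twist region (`true` = a positive half-twist
region, `false` = a negative one), since the over-strand always occupies the odd labels. -/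

/-- Bottom-left end of a crossing in a twist region of sign `h`. -/
def blSlot (h : Bool) : Fin 4 := if h then 3 else 0
/-- Bottom-right end of a crossing in a twist region of sign `h`. -/
def brSlot (h : Bool) : Fin 4 := if h then 0 else 1
/-- Top-right end of a crossing in a twist region of sign `h`. -/
def trSlot (h : Bool) : Fin 4 := if h then 1 else 2
/-- Top-left end of a crossing in a twist region of sign `h`. -/
def tlSlot (h : Bool) : Fin 4 := if h then 2 else 3

/-- `TwistRegion D m h v`: the crossings `v 0, …, v (m-1)` are stacked from bottom to top
into a vertical twist region of `m` half-twists of sign `h`. -/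
def TwistRegion (D : Diagram) (m : ℕ) (h : Bool) (v : Fin m → D.X) : Prop :=
  ∀ (j : ℕ) (h1 : j < m) (h2 : j + 1 < m),
    D.θ (v ⟨j, h1⟩, tlSlot h) = (v ⟨j + 1, h2⟩, blSlot h) ∧
    D.θ (v ⟨j, h1⟩, trSlot h) = (v ⟨j + 1, h2⟩, brSlot h)

/-- `IsStdPretzel h₁ h₂ h₃ p q r hp hq hr D` says that the diagram `D` is (a copy of) the
standard diagram of the pretzel link with three twist regions of `p`, `q` and `r`
half-twists, of signs `h₁`, `h₂`, `h₃` (`true` = positive), equipped with some orientation: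
the three twist regions stand side by side and are closed up by three arcs at the top
(left top-right end to middle top-left end, middle top-right end to right top-left end,
and left top-left end to right top-right end around the back) and likewise by three arcs
at the bottom. -/
def IsStdPretzel (h₁ h₂ h₃ : Bool) (p q r : ℕ) (hp : 0 < p) (hq : 0 < q) (hr : 0 < r)
    (D : Diagram) : Prop :=
  ∃ φ : (Fin p ⊕ (Fin q ⊕ Fin r)) ≃ D.X,
    TwistRegion D p h₁ (fun j => φ (Sum.inl j)) ∧
    TwistRegion D q h₂ (fun j => φ (Sum.inr (Sum.inl j))) ∧
    TwistRegion D r h₃ (fun j => φ (Sum.inr (Sum.inr j))) ∧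
    D.θ (φ (Sum.inl ⟨p - 1, by omega⟩), trSlot h₁)
      = (φ (Sum.inr (Sum.inl ⟨q - 1, by omega⟩)), tlSlot h₂) ∧
    D.θ (φ (Sum.inr (Sum.inl ⟨q - 1, by omega⟩)), trSlot h₂)
      = (φ (Sum.inr (Sum.inr ⟨r - 1, by omega⟩)), tlSlot h₃) ∧
    D.θ (φ (Sum.inl ⟨p - 1, by omega⟩), tlSlot h₁)
      = (φ (Sum.inr (Sum.inr ⟨r - 1, by omega⟩)), trSlot h₃) ∧
    D.θ (φ (Sum.inl ⟨0, hp⟩), brSlot h₁)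
      = (φ (Sum.inr (Sum.inl ⟨0, hq⟩)), blSlot h₂) ∧
    D.θ (φ (Sum.inr (Sum.inl ⟨0, hq⟩)), brSlot h₂)
      = (φ (Sum.inr (Sum.inr ⟨0, hr⟩)), blSlot h₃) ∧
    D.θ (φ (Sum.inl ⟨0, hp⟩), blSlot h₁)
      = (φ (Sum.inr (Sum.inr ⟨0, hr⟩)), brSlot h₃)

/-! ## Khovanov homology of an oriented link diagram (following Viro) -/

/-- An enhanced Kauffman state of the diagram `D`: a Kauffman state `st` (assigning the
label `A` — encoded as `false` — or `B` — encoded as `true` — to each crossing) together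
with a sign (`true` = `+`, `false` = `-`) attached to each circle of the smoothed diagram
`D_st`, encoded as a function on darts which is constant on each circle. -/
structure EState (D : Diagram) where
  st : D.X → Bool
  sgn : D.Dart → Bool
  const : ∀ a b, circGen D st a b → sgn a = sgn b

instance (D : Diagram) : Finite (EState D) := by
  have hinj : Function.Injective (fun S : EState D => (S.st, S.sgn)) := by
    intro a b h
    cases a
    cases b
    simp only [Prod.mk.injEq] at h
    obtain ⟨h1, h2⟩ := h
    subst h1
    subst h2
    rfl
  exact Finite.of_injective _ hinj

noncomputable instance (D : Diagram) : Fintype (EState D) := Fintype.ofFinite _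

/-- The sign attached by an enhanced state to each circle of the smoothed diagram. -/
def EState.sgnQ {D : Diagram} (S : EState D) : Circles D S.st → Bool :=
  Quot.lift S.sgn S.const

/-- `τ(S)`: the number of circles with sign `+` minus the number of circles with sign `-`. -/
def EState.tau {D : Diagram} (S : EState D) : ℤ :=
  (Nat.card {c : Circles D S.st // S.sgnQ c = true} : ℤ) -
    (Nat.card {c : Circles D S.st // S.sgnQ c = false} : ℤ)

/-- The number of `B`-labels of the underlying Kauffman state. -/
def EState.nB {D : Diagram} (S : EState D) : ℕ :=
  (Finset.univ.filter fun x : D.X => S.st x = true).card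

/-- The homological grading `i(S) = (ω - σ)/2` (which equals `#B - n`). -/
def EState.iDeg {D : Diagram} (S : EState D) : ℤ := (S.nB : ℤ) - (D.nNeg : ℤ)

/-- The quantum grading `j(S) = ω + i(S) + τ(S)`. -/
def EState.jDeg {D : Diagram} (S : EState D) : ℤ := D.writhe + S.iDeg + S.tau

/-- The circle of the smoothed diagram `D_s` through the dart `d` touches the crossing `x`. -/
def touchesCrossing (D : Diagram) (s : D.X → Bool) (d : D.Dart) (x : D.X) : Prop :=
  ∃ i : Fin 4, Relation.EqvGen (circGen D s) d (x, i)

/-- The enhanced state `T` is adjacent to the enhanced state `S`: they assign identical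
labels to all crossings except one, where `S` assigns an `A`-label and `T` a `B`-label,
they have the same quantum grading, and they assign the same signs to the common circles
(the circles not touching the changed crossing). -/
def EState.Adjacent {D : Diagram} (S T : EState D) : Prop :=
  ∃ x : D.X,
    S.st x = false ∧ T.st x = true ∧ (∀ y, y ≠ x → T.st y = S.st y) ∧
    T.jDeg = S.jDeg ∧
    ∀ d : D.Dart, ¬ touchesCrossing D S.st d x → T.sgn d = S.sgn d

/-- The number of `B`-labelled crossings coming after the changed crossing
(in the fixed linear order on the crossings). -/
def kAfter {D : Diagram} (S T : EState D) : ℕ :=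
  (Finset.univ.filter fun y : D.X =>
    T.st y = true ∧ ∃ x : D.X, S.st x ≠ T.st x ∧ x < y).card

/-- The incidence number `(S : T)`: `(-1)^k` if `T` is adjacent to `S`, and `0` otherwise. -/
def incNum {D : Diagram} (S T : EState D) : ℤ :=
  if S.Adjacent T then (-1) ^ kAfter S T else 0

/-- The Khovanov chain group: the free abelian group on the enhanced states of `D`. -/
abbrev KChain (D : Diagram) : Type := EState D →₀ ℤ

/-- The Khovanov differential `∂ S = Σ_T (S : T) T`. -/
noncomputable def khDiff (D : Diagram) : KChain D →ₗ[ℤ] KChain D :=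
  Finsupp.linearCombination ℤ fun S => ∑ T : EState D, Finsupp.single T (incNum S T)

/-- The subgroup of chains of bidegree `(i, j)` (spanned by the enhanced states `S` with
`i(S) = i` and `j(S) = j`). -/
def khGrade (D : Diagram) (i j : ℤ) : Submodule ℤ (KChain D) :=
  Finsupp.supported ℤ ℤ {S : EState D | S.iDeg = i ∧ S.jDeg = j}

/-- The cycles of bidegree `(i, j)`: `Ker ∂ᵢ`. -/
def khCycles (D : Diagram) (i j : ℤ) : Submodule ℤ (KChain D) :=
  LinearMap.ker (khDiff D) ⊓ khGrade D i j

/-- The boundaries of bidegree `(i, j)`: `Im ∂_{i-1}`. -/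
def khBoundaries (D : Diagram) (i j : ℤ) : Submodule ℤ (KChain D) :=
  Submodule.map (khDiff D) (khGrade D (i - 1) j)

/-- The Khovanov homology `KH^{i,j}(D) = Ker ∂ᵢ / Im ∂_{i-1}` of the diagram `D`
(a link invariant). -/
def KH (D : Diagram) (i j : ℤ) : Type :=
  ↥(khCycles D i j) ⧸ Submodule.comap (khCycles D i j).subtype (khBoundaries D i j)

noncomputable instance (D : Diagram) (i j : ℤ) : AddCommGroup (KH D i j) :=
  inferInstanceAs (AddCommGroup
    (↥(khCycles D i j) ⧸ Submodule.comap (khCycles D i j).subtype (khBoundaries D i j)))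

noncomputable instance (D : Diagram) (i j : ℤ) : Module ℤ (KH D i j) :=
  inferInstanceAs (Module ℤ
    (↥(khCycles D i j) ⧸ Submodule.comap (khCycles D i j).subtype (khBoundaries D i j)))

/-- `j` is the real-extreme quantum grading of the link represented by `D`: it is the
smallest quantum grading at which the Khovanov homology is non-trivial for some
homological grading. -/
def IsRealExtremeGrading (D : Diagram) (j : ℤ) : Prop :=
  (∃ i : ℤ, Nontrivial (KH D i j)) ∧
  ∀ j' : ℤ, j' < j → ∀ i : ℤ, ¬ Nontrivial (KH D i j')


/-! The quantum grading of an enhanced state is `j(S) = w + #B - n + τ(S)`, and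
`τ(S) ≥ -#circles`. In the standard diagram of `P(p, q, r)` every circle of a smoothing passes
through the top-left end of a `B`-crossing or through the bottom end of a twist region, and the
bottom ends lie on at most three circles, two of which merge as soon as there is a
`B`-crossing. So a Kauffman state with `B`-labels has at most `#B + 2` circles, while the
all-`A` smoothing has exactly three. Hence the all-`A` state with every circle labelled `-` is
the unique enhanced state of minimal quantum grading `p + q + r - 3n - 3`; it is a cycle, and no
state of that grading lies in homological degree `-n - 1`, so the homology there is `ℤ`. -/

namespace Diagram

lemma theta_eq_comm (D : Diagram) {a b : D.Dart} : D.θ a = b ↔ D.θ b = a :=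
  ⟨fun h => h ▸ D.invol a, fun h => h ▸ D.invol b⟩

lemma nPos_add_nNeg (D : Diagram) : D.nPos + D.nNeg = Fintype.card D.X := by
  simpa [nPos, nNeg, Bool.not_eq_true] using
    Finset.card_filter_add_card_filter_not (s := Finset.univ) (fun x : D.X => D.posCr x = true)

lemma writhe_eq (D : Diagram) : D.writhe = Fintype.card D.X - 2 * (D.nNeg : ℤ) := by
  have := D.nPos_add_nNeg
  rw [writhe]
  omega

end Diagram

def numB (D : Diagram) (s : D.X → Bool) : ℕ :=
  (Finset.univ.filter fun x : D.X => s x = true).card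

@[simp] lemma numB_allA (D : Diagram) : numB D (fun _ => false) = 0 := by
  simp [numB]

namespace EState

variable {D : Diagram}

lemma ext {S T : EState D} (hst : S.st = T.st) (hsgn : S.sgn = T.sgn) : S = T := by
  cases S
  cases T
  cases hst
  cases hsgn
  rfl

lemma nB_eq_numB (S : EState D) : S.nB = numB D S.st := rfl

lemma card_pos_add_card_neg (S : EState D) :
    Nat.card {c // S.sgnQ c = true} + Nat.card {c // S.sgnQ c = false} = nCircles D S.st := by
  have : Fintype (Circles D S.st) := Fintype.ofFinite _
  simp only [nCircles, Nat.card_eq_fintype_card, Fintype.card_subtype]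
  simpa [Bool.not_eq_true] using
    Finset.card_filter_add_card_filter_not (s := Finset.univ) (fun c => S.sgnQ c = true)

lemma neg_nCircles_le_tau (S : EState D) : -(nCircles D S.st : ℤ) ≤ S.tau := by
  have := S.card_pos_add_card_neg
  rw [tau]
  omega

lemma neg_nCircles_lt_tau {S : EState D} {d : D.Dart} (hd : S.sgn d = true) :
    -(nCircles D S.st : ℤ) < S.tau := by
  have hpos : 0 < Nat.card {c // S.sgnQ c = true} :=
    Nat.card_pos_iff.mpr ⟨⟨⟨Quot.mk _ d, hd⟩⟩, inferInstance⟩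
  have := S.card_pos_add_card_neg
  rw [tau]
  omega

lemma tau_eq_neg_nCircles {S : EState D} (h : ∀ d, S.sgn d = false) :
    S.tau = -(nCircles D S.st : ℤ) := by
  have : IsEmpty {c // S.sgnQ c = true} :=
    ⟨fun ⟨c, hc⟩ => by induction c using Quot.ind; simp [sgnQ, h] at hc⟩
  have := S.card_pos_add_card_neg
  rw [Nat.card_of_isEmpty] at this
  rw [tau, Nat.card_of_isEmpty]
  omega

lemma jDeg_eq (S : EState D) :
    S.jDeg = D.writhe + numB D S.st - D.nNeg + S.tau := by
  rw [jDeg, iDeg, nB_eq_numB]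
  ring

end EState

def allAMinus (D : Diagram) : EState D := ⟨fun _ => false, fun _ => false, fun _ _ _ => rfl⟩

lemma allAMinus_iDeg (D : Diagram) : (allAMinus D).iDeg = -(D.nNeg : ℤ) := by
  simp [EState.iDeg, EState.nB_eq_numB, allAMinus]

lemma allAMinus_jDeg (D : Diagram) :
    (allAMinus D).jDeg = D.writhe - D.nNeg - nCircles D (fun _ => false) := by
  rw [EState.jDeg_eq, EState.tau_eq_neg_nCircles (fun _ => rfl)]
  simp only [allAMinus, numB_allA, Nat.cast_zero]
  ring

lemma allAMinus_jDeg_lt_of_nCircles_lt {D : Diagram}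
    (h : ∀ s : D.X → Bool, s ≠ (fun _ => false) →
      nCircles D s < numB D s + nCircles D (fun _ => false))
    (S : EState D) (hS : S ≠ allAMinus D) : (allAMinus D).jDeg < S.jDeg := by
  rw [allAMinus_jDeg, S.jDeg_eq]
  by_cases hst : S.st = fun _ => false
  · obtain ⟨d, hd⟩ : ∃ d, S.sgn d = true := by
      by_contra! hsgn
      exact hS (EState.ext hst (funext fun d => by simpa [allAMinus] using hsgn d))
    have := EState.neg_nCircles_lt_tau hd
    rw [hst] at this ⊢
    rw [numB_allA, Nat.cast_zero]
    omega
  · have := h S.st hst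
    have := S.neg_nCircles_le_tau
    omega

section Homology

variable {D : Diagram}

lemma KH_subsingleton_of_forall_ne {i j : ℤ} (h : ∀ S : EState D, S.iDeg = i → S.jDeg ≠ j) :
    Subsingleton (KH D i j) := by
  have hempty : {S : EState D | S.iDeg = i ∧ S.jDeg = j} = ∅ :=
    Set.eq_empty_of_forall_notMem fun S hS => h S hS.1 hS.2
  have hgrade : khGrade D i j = ⊥ := by
    rw [khGrade, hempty, Finsupp.supported_empty]
  have : Subsingleton (khCycles D i j) := by
    rw [khCycles, hgrade, inf_bot_eq]
    infer_instance
  exact (Submodule.Quotient.mk_surjective _).subsingleton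

lemma KH_addEquiv_int_of_unique {i j : ℤ} (S₀ : EState D)
    (hS₀ : ∀ S : EState D, S.iDeg = i ∧ S.jDeg = j ↔ S = S₀)
    (hprev : ∀ S : EState D, S.iDeg = i - 1 → S.jDeg ≠ j)
    (hcycle : ∀ T, incNum S₀ T = 0) :
    Nonempty (KH D i j ≃+ ℤ) := by
  have hgrade : khGrade D i j = Finsupp.supported ℤ ℤ {S₀} := by
    rw [khGrade]
    congr
    ext S
    exact hS₀ S
  have hker : khGrade D i j ≤ LinearMap.ker (khDiff D) := by
    intro g hg
    rw [hgrade, Finsupp.mem_supported, ← Finset.coe_singleton, Finset.coe_subset] at hg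
    rw [LinearMap.mem_ker, Finsupp.support_subset_singleton.mp hg]
    simp [khDiff, hcycle]
  have hcycles : khCycles D i j = Finsupp.supported ℤ ℤ {S₀} := by
    rw [khCycles, inf_eq_right.mpr hker, hgrade]
  have hempty : {S : EState D | S.iDeg = i - 1 ∧ S.jDeg = j} = ∅ :=
    Set.eq_empty_of_forall_notMem fun S hS => hprev S hS.1 hS.2
  have hbdry : Submodule.comap (khCycles D i j).subtype (khBoundaries D i j) = ⊥ := by
    rw [khBoundaries, khGrade, hempty, Finsupp.supported_empty, Submodule.map_bot,
      Submodule.comap_bot, Submodule.ker_subtype]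
  exact ⟨((Submodule.quotEquivOfEqBot _ hbdry).trans <| (LinearEquiv.ofEq _ _ hcycles).trans <|
    (Finsupp.supportedEquivFinsupp _).trans <|
      Finsupp.uniqueLinearEquiv ℤ ℤ (⟨S₀, rfl⟩ : ({S₀} : Set (EState D)))).toAddEquiv⟩

theorem realExtremeKH_of_unique_min_jDeg (S₀ : EState D)
    (hmin : ∀ S : EState D, S ≠ S₀ → S₀.jDeg < S.jDeg) :
    IsRealExtremeGrading D S₀.jDeg ∧ Nonempty (KH D S₀.iDeg S₀.jDeg ≃+ ℤ) ∧
      ∀ i : ℤ, i ≠ S₀.iDeg → Subsingleton (KH D i S₀.jDeg) := by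
  have heq : ∀ S : EState D, S.jDeg = S₀.jDeg → S = S₀ := fun S hS => by
    by_contra hne
    exact (hmin S hne).ne' hS
  -- an adjacent state would have the same quantum grading but a different Kauffman state
  have hcycle : ∀ T, incNum S₀ T = 0 := fun T => by
    rw [incNum, if_neg]
    rintro ⟨x, hx₀, hxT, -, hj, -⟩
    rw [heq T hj, hx₀] at hxT
    exact Bool.false_ne_true hxT
  have hKH : Nonempty (KH D S₀.iDeg S₀.jDeg ≃+ ℤ) := by
    refine KH_addEquiv_int_of_unique S₀ (fun S => ⟨fun h => heq S h.2, ?_⟩) ?_ hcycle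
    · rintro rfl
      exact ⟨rfl, rfl⟩
    · intro S hi hj
      rw [heq S hj] at hi
      omega
  refine ⟨⟨⟨S₀.iDeg, hKH.some.toEquiv.nontrivial⟩, ?_⟩, hKH, ?_⟩
  · intro j hj i
    rw [not_nontrivial_iff_subsingleton]
    refine KH_subsingleton_of_forall_ne fun S _ hS => ?_
    rcases eq_or_ne S S₀ with rfl | hne
    · exact hj.ne hS.symm
    · exact (hmin S hne).not_gt (hS ▸ hj)
  · intro i hi
    exact KH_subsingleton_of_forall_ne fun S hS hj => hi (hS ▸ heq S hj ▸ rfl)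

end Homology

namespace Circles

variable {D : Diagram} {s : D.X → Bool}

abbrev mk (s : D.X → Bool) (d : D.Dart) : Circles D s := Quot.mk _ d

lemma mk_theta (d : D.Dart) : mk s (D.θ d) = mk s d :=
  (Quot.sound (r := circGen D s) (Or.inl rfl)).symm

lemma mk_smoothStep (d : D.Dart) : mk s (smoothStep D s d) = mk s d :=
  (Quot.sound (r := circGen D s) (Or.inr rfl)).symm

lemma mk_eq_of_theta_eq {a b : D.Dart} (h : D.θ a = b) : mk s a = mk s b :=
  h ▸ (mk_theta a).symm

lemma mk_one_eq_mk_zero {x : D.X} (h : s x = false) : mk s (x, 1) = mk s (x, 0) := by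
  rw [← mk_smoothStep]
  simp [smoothStep, h]

lemma mk_two_eq_mk_three {x : D.X} (h : s x = false) : mk s (x, 2) = mk s (x, 3) := by
  rw [← mk_smoothStep]
  simp [smoothStep, h]

lemma mk_one_eq_mk_two {x : D.X} (h : s x = true) : mk s (x, 1) = mk s (x, 2) := by
  rw [← mk_smoothStep]
  simp [smoothStep, h]

lemma mk_three_eq_mk_zero {x : D.X} (h : s x = true) : mk s (x, 3) = mk s (x, 0) := by
  rw [← mk_smoothStep]
  simp [smoothStep, h]

end Circles

open Circles

def circlesAtB (D : Diagram) (s : D.X → Bool) : Set (Circles D s) :=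
  {c | ∃ x, s x = true ∧ c = mk s (x, 2)}

lemma nCircles_le_numB_add_card {D : Diagram} {s : D.X → Bool} (T : Finset (Circles D s))
    (hT : ∀ c, c ∈ circlesAtB D s ∨ c ∈ T) : nCircles D s ≤ numB D s + T.card := by
  have : Fintype (Circles D s) := Fintype.ofFinite _
  have hsub : Finset.univ ⊆
      (Finset.univ.filter fun x => s x = true).image (fun x => mk s (x, 2)) ∪ T := by
    intro c _
    rcases hT c with ⟨x, hx, rfl⟩ | hc
    · exact Finset.mem_union_left _ (Finset.mem_image_of_mem _ (by simpa using hx))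
    · exact Finset.mem_union_right _ hc
  calc nCircles D s = Finset.univ.card := by rw [nCircles, Nat.card_eq_fintype_card]; rfl
    _ ≤ _ := Finset.card_le_card hsub
    _ ≤ _ := (Finset.card_union_le _ _).trans (Nat.add_le_add_right Finset.card_image_le _)

lemma mk_mem_of_mk_zero_mem_of_mk_three_mem {D : Diagram} {s : D.X → Bool}
    {W : Set (Circles D s)} (hW : circlesAtB D s ⊆ W) {x : D.X}
    (h₀ : mk s (x, 0) ∈ W) (h₃ : mk s (x, 3) ∈ W) (i : Fin 4) : mk s (x, i) ∈ W := by
  have hB : s x = true → mk s (x, 2) ∈ W := fun h => hW ⟨x, h, rfl⟩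
  fin_cases i
  · exact h₀
  · cases h : s x
    · exact (mk_one_eq_mk_zero h).symm ▸ h₀
    · exact (mk_one_eq_mk_two h).symm ▸ hB h
  · cases h : s x
    · exact (mk_two_eq_mk_three h).symm ▸ h₃
    · exact hB h
  · exact h₃

@[simp] lemma blSlot_true : blSlot true = 3 := rfl
@[simp] lemma brSlot_true : brSlot true = 0 := rfl
@[simp] lemma trSlot_true : trSlot true = 1 := rfl
@[simp] lemma tlSlot_true : tlSlot true = 2 := rfl

namespace TwistRegion

variable {D : Diagram} {m : ℕ} {v : Fin m → D.X}

lemma theta_two (hv : TwistRegion D m true v) {k : ℕ} (hk : k + 1 < m) :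
    D.θ (v ⟨k, by omega⟩, 2) = (v ⟨k + 1, hk⟩, 3) :=
  (hv k _ hk).1

lemma theta_one (hv : TwistRegion D m true v) {k : ℕ} (hk : k + 1 < m) :
    D.θ (v ⟨k, by omega⟩, 1) = (v ⟨k + 1, hk⟩, 0) :=
  (hv k _ hk).2

lemma mk_mem_circlesAtB_union (hv : TwistRegion D m true v) (h0 : 0 < m) (s : D.X → Bool) (n : Fin m)
    (i : Fin 4) :
    mk s (v n, i) ∈ circlesAtB D s ∪ {mk s (v ⟨0, h0⟩, 3), mk s (v ⟨0, h0⟩, 0)} := by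
  obtain ⟨n, hn⟩ := n
  induction n generalizing i with
  | zero =>
    exact mk_mem_of_mk_zero_mem_of_mk_three_mem Set.subset_union_left (by simp) (by simp) i
  | succ k ih =>
    refine mk_mem_of_mk_zero_mem_of_mk_three_mem Set.subset_union_left ?_ ?_ i
    · exact mk_eq_of_theta_eq (hv.theta_one hn) ▸ ih 1 (by omega)
    · exact mk_eq_of_theta_eq (hv.theta_two hn) ▸ ih 2 (by omega)

lemma mk_three_eq_mk_zero (hv : TwistRegion D m true v) (h0 : 0 < m) {s : D.X → Bool}
    (hB : ∃ j, s (v j) = true) : mk s (v ⟨0, h0⟩, 3) = mk s (v ⟨0, h0⟩, 0) := by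
  -- below the lowest `B`-crossing both sides of the region run straight down
  have key : ∀ (n : ℕ) (hn : n < m),
      (mk s (v ⟨n, hn⟩, 3) = mk s (v ⟨0, h0⟩, 3) ∧ mk s (v ⟨n, hn⟩, 0) = mk s (v ⟨0, h0⟩, 0)) ∨
        mk s (v ⟨0, h0⟩, 3) = mk s (v ⟨0, h0⟩, 0) := by
    intro n hn
    induction n with
    | zero => exact Or.inl ⟨rfl, rfl⟩
    | succ k ih =>
      rcases ih (by omega) with ⟨h3, h0⟩ | hmerge
      · cases h : s (v ⟨k, by omega⟩)
        · left
          rw [← mk_eq_of_theta_eq (hv.theta_two hn), ← mk_eq_of_theta_eq (hv.theta_one hn),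
            mk_two_eq_mk_three h, mk_one_eq_mk_zero h]
          exact ⟨h3, h0⟩
        · exact Or.inr (h3.symm.trans ((Circles.mk_three_eq_mk_zero h).trans h0))
      · exact Or.inr hmerge
  obtain ⟨⟨j, hj⟩, hBj⟩ := hB
  rcases key j hj with ⟨h3, h0⟩ | hmerge
  · exact h3.symm.trans ((Circles.mk_three_eq_mk_zero hBj).trans h0)
  · exact hmerge

/-- In a positive twist region the ends `0, 1` of a crossing are on its right and `2, 3` on
its left; edges inside the region never change sides. -/
lemma theta_cases (hv : TwistRegion D m true v) (h0 : 0 < m) (j : Fin m) (i : Fin 4) :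
    (∃ (j' : Fin m) (i' : Fin 4), D.θ (v j, i) = (v j', i') ∧ ((i : ℕ) ≤ 1 ↔ (i' : ℕ) ≤ 1)) ∨
      (j = ⟨0, h0⟩ ∧ (i = 0 ∨ i = 3)) ∨ (j = ⟨m - 1, by omega⟩ ∧ (i = 1 ∨ i = 2)) := by
  obtain ⟨j, hj⟩ := j
  fin_cases i
  · rcases j with _ | k
    · simp
    · exact Or.inl ⟨⟨k, by omega⟩, 1, D.theta_eq_comm.mp (hv.theta_one hj), by simp⟩
  · by_cases htop : j + 1 < m
    · exact Or.inl ⟨⟨j + 1, htop⟩, 0, hv.theta_one htop, by simp⟩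
    · exact Or.inr (Or.inr ⟨Fin.ext (by simp only; omega), by simp⟩)
  · by_cases htop : j + 1 < m
    · exact Or.inl ⟨⟨j + 1, htop⟩, 3, hv.theta_two htop, by simp⟩
    · exact Or.inr (Or.inr ⟨Fin.ext (by simp only; omega), by simp⟩)
  · rcases j with _ | k
    · simp
    · exact Or.inl ⟨⟨k, by omega⟩, 2, D.theta_eq_comm.mp (hv.theta_two hj), by simp⟩

end TwistRegion

namespace IsStdPretzel

variable {p q r : ℕ} {hp : 0 < p} {hq : 0 < q} {hr : 0 < r} {D : Diagram}

lemma card_X (hD : IsStdPretzel true true true p q r hp hq hr D) :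
    Fintype.card D.X = p + q + r := by
  obtain ⟨φ, -⟩ := hD
  simp [← Fintype.card_congr φ, add_assoc]

/-- `a`, `b`, `c` are the circles through the bottom ends of the three twist regions. -/
lemma exists_cover (hD : IsStdPretzel true true true p q r hp hq hr D) (s : D.X → Bool) :
    ∃ a b c : Circles D s, (∀ e, e ∈ circlesAtB D s ∨ e ∈ ({a, b, c} : Finset _)) ∧
      ((∃ x, s x = true) → a = b ∨ b = c ∨ c = a) := by
  obtain ⟨φ, h₁, h₂, h₃, -, -, -, hb₁₂, hb₂₃, hb₁₃⟩ := hD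
  have e₁₂ : mk s (φ (.inl ⟨0, hp⟩), 0) = mk s (φ (.inr (.inl ⟨0, hq⟩)), 3) :=
    mk_eq_of_theta_eq hb₁₂
  have e₂₃ : mk s (φ (.inr (.inl ⟨0, hq⟩)), 0) = mk s (φ (.inr (.inr ⟨0, hr⟩)), 3) :=
    mk_eq_of_theta_eq hb₂₃
  have e₁₃ : mk s (φ (.inl ⟨0, hp⟩), 3) = mk s (φ (.inr (.inr ⟨0, hr⟩)), 0) :=
    mk_eq_of_theta_eq hb₁₃
  refine ⟨mk s (φ (.inl ⟨0, hp⟩), 3), mk s (φ (.inl ⟨0, hp⟩), 0),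
    mk s (φ (.inr (.inl ⟨0, hq⟩)), 0), ?_, ?_⟩
  · rintro ⟨⟨x, i⟩⟩
    have hx : mk s (x, i) ∈ circlesAtB D s ∪ {mk s (φ (.inl ⟨0, hp⟩), 3),
        mk s (φ (.inl ⟨0, hp⟩), 0), mk s (φ (.inr (.inl ⟨0, hq⟩)), 0)} := by
      obtain ⟨e | e | e, rfl⟩ := φ.surjective x
      · refine Set.union_subset_union_right _ ?_ (h₁.mk_mem_circlesAtB_union hp s e i)
        rintro c (rfl | rfl) <;> simp
      · refine Set.union_subset_union_right _ ?_ (h₂.mk_mem_circlesAtB_union hq s e i)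
        rintro c (rfl | rfl) <;> simp [e₁₂]
      · refine Set.union_subset_union_right _ ?_ (h₃.mk_mem_circlesAtB_union hr s e i)
        rintro c (rfl | rfl) <;> simp [e₂₃, e₁₃]
    show mk s (x, i) ∈ _ ∨ mk s (x, i) ∈ _
    simp only [Set.mem_union, Set.mem_insert_iff, Set.mem_singleton_iff] at hx
    simp only [Finset.mem_insert, Finset.mem_singleton]
    tauto
  · rintro ⟨x, hx⟩
    obtain ⟨e | e | e, rfl⟩ := φ.surjective x
    · exact Or.inl (h₁.mk_three_eq_mk_zero hp ⟨e, hx⟩)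
    · exact Or.inr (Or.inl (e₁₂.trans (h₂.mk_three_eq_mk_zero hq ⟨e, hx⟩)))
    · exact Or.inr (Or.inr ((e₂₃.trans (h₃.mk_three_eq_mk_zero hr ⟨e, hx⟩)).trans e₁₃.symm))

lemma nCircles_le_numB_add_three (hD : IsStdPretzel true true true p q r hp hq hr D) (s : D.X → Bool) :
    nCircles D s ≤ numB D s + 3 := by
  obtain ⟨a, b, c, hcover, -⟩ := hD.exists_cover s
  exact (nCircles_le_numB_add_card _ hcover).trans (by grw [Finset.card_le_three])

lemma nCircles_le_numB_add_two (hD : IsStdPretzel true true true p q r hp hq hr D)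
    {s : D.X → Bool} (hs : ∃ x, s x = true) : nCircles D s ≤ numB D s + 2 := by
  obtain ⟨a, b, c, hcover, hmerge⟩ := hD.exists_cover s
  refine (nCircles_le_numB_add_card _ hcover).trans (Nat.add_le_add_left ?_ _)
  rcases hmerge hs with rfl | rfl | rfl <;> simp [Finset.card_le_two, Finset.pair_comm]

/-- Labels the circles of the all-`A` smoothing: the ends on the left of the `k`-th twist region
and on the right of the `(k-1)`-st one (cyclically) lie on the circle labelled `k`. -/
def allAColour (φ : (Fin p ⊕ (Fin q ⊕ Fin r)) ≃ D.X) (d : D.Dart) : Fin 3 :=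
  Sum.elim (fun _ => 0) (Sum.elim (fun _ => 1) (fun _ => 2)) (φ.symm d.1) +
    if (d.2 : ℕ) ≤ 1 then 1 else 0

lemma three_le_nCircles_allA (hD : IsStdPretzel true true true p q r hp hq hr D) :
    3 ≤ nCircles D (fun _ => false) := by
  obtain ⟨φ, h₁, h₂, h₃, ht₁₂, ht₂₃, ht₁₃, hb₁₂, hb₂₃, hb₁₃⟩ := hD
  simp only [blSlot_true, brSlot_true, trSlot_true, tlSlot_true] at *
  have ht₂₁ := D.theta_eq_comm.mp ht₁₂
  have ht₃₂ := D.theta_eq_comm.mp ht₂₃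
  have ht₃₁ := D.theta_eq_comm.mp ht₁₃
  have hb₂₁ := D.theta_eq_comm.mp hb₁₂
  have hb₃₂ := D.theta_eq_comm.mp hb₂₃
  have hb₃₁ := D.theta_eq_comm.mp hb₁₃
  have hθ : ∀ d, allAColour φ (D.θ d) = allAColour φ d := by
    rintro ⟨x, i⟩
    obtain ⟨e | e | e, rfl⟩ := φ.surjective x
    · rcases h₁.theta_cases hp e i with ⟨j, i', h, hside⟩ | ⟨rfl, rfl | rfl⟩ | ⟨rfl, rfl | rfl⟩ <;>
        simp [allAColour, *]
    · rcases h₂.theta_cases hq e i with ⟨j, i', h, hside⟩ | ⟨rfl, rfl | rfl⟩ | ⟨rfl, rfl | rfl⟩ <;>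
        simp [allAColour, *]
    · rcases h₃.theta_cases hr e i with ⟨j, i', h, hside⟩ | ⟨rfl, rfl | rfl⟩ | ⟨rfl, rfl | rfl⟩ <;>
        simp [allAColour, *]
  have hsmooth : ∀ d, allAColour φ (smoothStep D (fun _ => false) d) = allAColour φ d := by
    rintro ⟨x, i⟩
    fin_cases i <;> simp [smoothStep, allAColour]
  have hconst : ∀ a b, circGen D (fun _ => false) a b → allAColour φ a = allAColour φ b := by
    rintro a b (rfl | rfl)
    exacts [(hθ a).symm, (hsmooth a).symm]
  have hsurj : Function.Surjective (Quot.lift _ hconst) := by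
    intro k
    fin_cases k
    exacts [⟨mk _ (φ (.inl ⟨0, hp⟩), 3), by simp [allAColour]⟩,
      ⟨mk _ (φ (.inl ⟨0, hp⟩), 0), by simp [allAColour]⟩,
      ⟨mk _ (φ (.inr (.inl ⟨0, hq⟩)), 0), by simp [allAColour]⟩]
  simpa [nCircles, Circles] using Nat.card_le_card_of_surjective _ hsurj

lemma nCircles_allA (hD : IsStdPretzel true true true p q r hp hq hr D) :
    nCircles D (fun _ => false) = 3 :=
  le_antisymm (by simpa using hD.nCircles_le_numB_add_three (fun _ => false)) hD.three_le_nCircles_allA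

lemma allAMinus_jDeg_eq (hD : IsStdPretzel true true true p q r hp hq hr D) :
    (allAMinus D).jDeg = (p : ℤ) + q + r - 3 * D.nNeg - 3 := by
  rw [allAMinus_jDeg, D.writhe_eq, hD.card_X, hD.nCircles_allA]
  push_cast
  ring

lemma allAMinus_jDeg_lt (hD : IsStdPretzel true true true p q r hp hq hr D) {S : EState D}
    (hS : S ≠ allAMinus D) : (allAMinus D).jDeg < S.jDeg := by
  refine allAMinus_jDeg_lt_of_nCircles_lt (fun s hs => ?_) S hS
  have hB : ∃ x, s x = true := by
    by_contra! h
    exact hs (funext fun x => by simpa using h x)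
  rw [hD.nCircles_allA]
  exact Nat.lt_of_le_of_lt (hD.nCircles_le_numB_add_two hB) (by omega)

end IsStdPretzel

/-- For all positive integers `p`, `q`, `r`, the real-extreme Khovanov
homology of the pretzel link `P(p,q,r)` sits in quantum grading `j̲ = p+q+r-3n-3` and is
`ℤ` in homological grading `i = -n` and trivial in all other homological gradings, where
`n` is the number of negative crossings of the (oriented) standard diagram. -/
theorem realExtremeKH_pretzel_ppp (p q r : ℕ) (hp : 0 < p) (hq : 0 < q) (hr : 0 < r)
    (D : Diagram) (hD : IsStdPretzel true true true p q r hp hq hr D) :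
    IsRealExtremeGrading D ((p : ℤ) + q + r - 3 * D.nNeg - 3) ∧
    Nonempty (KH D (-(D.nNeg : ℤ)) ((p : ℤ) + q + r - 3 * D.nNeg - 3) ≃+ ℤ) ∧
    (∀ i : ℤ, i ≠ -(D.nNeg : ℤ) →
      Subsingleton (KH D i ((p : ℤ) + q + r - 3 * D.nNeg - 3))) := by
  have h := realExtremeKH_of_unique_min_jDeg (allAMinus D) fun S => hD.allAMinus_jDeg_lt
  rwa [allAMinus_iDeg, hD.allAMinus_jDeg_eq] at h

end
end

section
/- For all positive integers p, q, r, the real-extreme Khovanov homology of the pretzel link P(-p, -q, -r) is KH^{i,j̲}(P(-p, -q, -r)) ≅ ℤ at i = -n and j̲ = -3n+1, and is trivial at all other homological gradings at quantum grading j̲, where n is the number of negative crossings in the standard link diagram of P(-p, -q, -r). -/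
open scoped Classical

noncomputable section

section Merge
variable {S : Type} [Finite S]

/-- relation identifying `a ~ b` and `c ~ d`. -/
def rel2 (a b c d : S) : S → S → Prop := fun u v => (u = a ∧ v = b) ∨ (u = c ∧ v = d)

/-- merge map: send `b` to `a`. -/
def mapF (a b : S) : S → S := fun x => if x = b then a else x

/-- number of identifications effected by merging `a~b` then `c~d`. -/
def d2 (a b c d : S) : ℕ :=
  (if a = b then 0 else 1) + (if mapF a b c = mapF a b d then 0 else 1)

theorem d2_le_two (a b c d : S) : d2 a b c d ≤ 2 := by
  unfold d2; split_ifs <;> omega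

theorem d2_eq_zero (a b c d : S) (h1 : a = b) (h2 : c = d) : d2 a b c d = 0 := by
  unfold d2; rw [h2]; simp [h1]

theorem d2_eq_one (a b c d : S) (h1 : a = b) (h2 : ¬ b = c) (h3 : c = d) :
    d2 b c d a = 1 := by
  unfold d2 mapF
  subst h1 h3
  simp [h2, Ne.symm h2]

/-- the key exclusion: if the B-merge has no identifications then the A-merge has ≤ 1. -/
theorem d2_flip (α β γ δ : S) (h : d2 β γ δ α = 0) : d2 α β γ δ ≤ 1 := by
  unfold d2 mapF at *
  by_cases h1 : β = γ
  · by_cases h2 : δ = γ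
    · by_cases h3 : α = γ
      · simp [h1, h2, h3]
      · exfalso
        simp [h2, h3] at h
        exact h3 (h.2.symm.trans h.1)
    · by_cases h3 : α = γ
      · exfalso; simp [h2, h3] at h; exact h2 (h.2.trans h1)
      · simp [h2, h3] at h
        obtain ⟨-, h4⟩ := h
        subst h4
        simp [h1]
        split_ifs <;> simp_all
  · simp [h1] at h
end Merge

section MergeCard
variable {S : Type} [Finite S]

theorem card_quot_rel2 (a b c d : S) :
    Nat.card (Quot (rel2 a b c d)) + d2 a b c d = Nat.card S := by
  classical
  set F := mapF a b with hF
  set c' := F c with hc'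
  set d' := F d with hd'
  set G := mapF c' d' with hG
  set H := fun x => G (F x) with hH
  have hFa : F a = a := by simp [hF, mapF]
  have hFb : F b = a := by simp [hF, mapF]
  have hGc' : G c' = c' := by simp [hG, mapF]
  have hGd' : G d' = c' := by simp [hG, mapF]
  have hFfix : ∀ x, (a = b ∨ x ≠ b) → F x = x := by
    intro x hx
    simp only [hF, mapF]
    split_ifs with h
    · rcases hx with hab | hxb
      · exact hab.trans h.symm
      · exact absurd h hxb
    · rfl
  have hGfix : ∀ x, (c' = d' ∨ x ≠ d') → G x = x := by
    intro x hx
    simp only [hG, mapF]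
    split_ifs with h
    · rcases hx with hcd | hxd
      · exact hcd.trans h.symm
      · exact absurd h hxd
    · rfl
  have hFne : a ≠ b → ∀ x, F x ≠ b := by
    intro hab x
    simp only [hF, mapF]
    split_ifs with h
    · exact hab
    · exact h
  have hGrange : ∀ x, G x = c' ∨ G x = x := by
    intro x
    simp only [hG, mapF]
    split_ifs
    · exact Or.inl rfl
    · exact Or.inr rfl
  have hHb : a ≠ b → ∀ x, H x ≠ b := by
    intro hab x
    show G (F x) ≠ b
    rcases hGrange (F x) with h | h
    · rw [h, hc']; exact hFne hab c
    · rw [h]; exact hFne hab x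
  have hHd : c' ≠ d' → ∀ x, H x ≠ d' := by
    intro hcd x
    simp only [hH, hG, mapF]
    split_ifs with h
    · exact hcd
    · exact h
  have hfix : ∀ x, (a = b ∨ x ≠ b) → (c' = d' ∨ x ≠ d') → H x = x := by
    intro x h1 h2
    simp only [hH]
    rw [hFfix x h1, hGfix x h2]
  have hidem : ∀ x, H (H x) = H x := by
    intro x
    apply hfix
    · by_cases hab : a = b
      · exact Or.inl hab
      · exact Or.inr (hHb hab x)
    · by_cases hcd : c' = d'
      · exact Or.inl hcd
      · exact Or.inr (hHd hcd x)
  have hHab : H a = H b := by simp only [hH]; rw [hFa, hFb]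
  have hHcd : H c = H d := by
    simp only [hH]
    rw [← hc', ← hd', hGc', hGd']
  -- mk-invariance
  have mkF : ∀ x, Quot.mk (rel2 a b c d) (F x) = Quot.mk _ x := by
    intro x
    simp only [hF, mapF]
    split_ifs with h
    · subst h; exact Quot.sound (Or.inl ⟨rfl, rfl⟩)
    · rfl
  have mkcd : Quot.mk (rel2 a b c d) c = Quot.mk _ d := Quot.sound (Or.inr ⟨rfl, rfl⟩)
  have mkG : ∀ x, Quot.mk (rel2 a b c d) (G x) = Quot.mk _ x := by
    intro x
    simp only [hG, mapF]
    split_ifs with h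
    · subst h
      exact ((mkF c).trans (mkcd.trans (mkF d).symm))
    · rfl
  have mkH : ∀ x, Quot.mk (rel2 a b c d) (H x) = Quot.mk _ x := by
    intro x
    exact (mkG (F x)).trans (mkF x)
  -- the equivalence
  have e : Quot (rel2 a b c d) ≃ {x : S // H x = x} :=
  { toFun := Quot.lift (fun x => ⟨H x, hidem x⟩) (by
      rintro u v (⟨rfl, rfl⟩ | ⟨rfl, rfl⟩)
      · exact Subtype.ext hHab
      · exact Subtype.ext hHcd)
    invFun := fun y => Quot.mk _ y.1
    left_inv := by
      apply Quot.ind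
      intro x
      exact mkH x
    right_inv := fun y => Subtype.ext y.2 }
  rw [Nat.card_congr e]
  have key : Nat.card {x : S // H x = x} + Nat.card {x : S // ¬ H x = x} = Nat.card S := by
    letI : Fintype S := Fintype.ofFinite S
    rw [Nat.card_eq_fintype_card, Nat.card_eq_fintype_card, Nat.card_eq_fintype_card,
      Fintype.card_subtype, Fintype.card_subtype]
    exact Finset.card_filter_add_card_filter_not (fun x => H x = x)
  have hcard : Nat.card {x : S // ¬ H x = x} = d2 a b c d := by
    by_cases hab : a = b <;> by_cases hcd : c' = d'
    · have : ∀ x : S, H x = x := fun x => hfix x (Or.inl hab) (Or.inl hcd)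
      have he : IsEmpty {x : S // ¬ H x = x} := ⟨fun y => y.2 (this y.1)⟩
      rw [Nat.card_of_isEmpty]
      simp only [d2]
      rw [← hF, ← hc', ← hd', if_pos hab, if_pos hcd]
    · -- a = b, c' ≠ d' : bad set = {d'}
      have hiff : ∀ x : S, (¬ H x = x) ↔ x = d' := by
        intro x
        constructor
        · intro hx
          by_contra hxd
          exact hx (hfix x (Or.inl hab) (Or.inr hxd))
        · intro hxd
          rw [hxd]
          have h1 : F d' = d' := hFfix d' (Or.inl hab)
          have h2 : H d' = c' := by show G (F d') = c'; rw [h1, hGd']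
          rw [h2]
          exact fun h => hcd h
      rw [Nat.card_congr (Equiv.subtypeEquivRight hiff)]
      haveI : Unique {x : S // x = d'} := ⟨⟨⟨d', rfl⟩⟩, by rintro ⟨x, rfl⟩; rfl⟩
      rw [Nat.card_unique]
      simp only [d2]
      rw [← hF, ← hc', ← hd', if_pos hab, if_neg hcd]
    · -- a ≠ b, c' = d' : bad set = {b}
      have hiff : ∀ x : S, (¬ H x = x) ↔ x = b := by
        intro x
        constructor
        · intro hx
          by_contra hxb
          exact hx (hfix x (Or.inr hxb) (Or.inl hcd))
        · intro hxb
          rw [hxb]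
          have h2 : H b = a := by
            show G (F b) = a; rw [hFb, hGfix a (Or.inl hcd)]
          rw [h2]
          exact fun h => hab h
      rw [Nat.card_congr (Equiv.subtypeEquivRight hiff)]
      haveI : Unique {x : S // x = b} := ⟨⟨⟨b, rfl⟩⟩, by rintro ⟨x, rfl⟩; rfl⟩
      rw [Nat.card_unique]
      simp only [d2]
      rw [← hF, ← hc', ← hd', if_neg hab, if_pos hcd]
    · -- both : bad set = {b, d'}
      have hbd : b ≠ d' := by
        intro h
        exact hFne hab d (by rw [← hd', ← h])
      have hiff : ∀ x : S, (¬ H x = x) ↔ x ∈ ({b, d'} : Set S) := by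
        intro x
        simp only [Set.mem_insert_iff, Set.mem_singleton_iff]
        constructor
        · intro hx
          by_contra hxx
          push_neg at hxx
          exact hx (hfix x (Or.inr hxx.1) (Or.inr hxx.2))
        · rintro (hxb | hxd)
          · rw [hxb]
            intro hh
            exact hHb hab b hh
          · rw [hxd]
            intro hh
            exact hHd hcd d' hh
      rw [Nat.card_congr (Equiv.subtypeEquivRight hiff)]
      rw [Nat.card_coe_set_eq, Set.ncard_pair hbd]
      simp only [d2]
      rw [← hF, ← hc', ← hd', if_neg hab, if_neg hcd]
  rw [← hcard]
  exact key
end MergeCard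

/-! ### Resmoothing machinery -/

section OffRel
variable (D : Diagram)

/-- the circle relation with the smoothing arcs at the crossing `x` removed. -/
def offRel (s : D.X → Bool) (x : D.X) : D.Dart → D.Dart → Prop :=
  fun a b => b = D.θ a ∨ (a.1 ≠ x ∧ b = smoothStep D s a)

theorem offRel_congr (s s' : D.X → Bool) (x : D.X) (h : ∀ y, y ≠ x → s y = s' y) :
    offRel D s x = offRel D s' x := by
  funext a b
  unfold offRel
  by_cases ha : a.1 = x
  · simp [ha]
  · have : smoothStep D s a = smoothStep D s' a := by
      unfold smoothStep
      rw [h a.1 ha]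
    rw [this]

instance offRel_finite (s : D.X → Bool) (x : D.X) : Finite (Quot (offRel D s x)) :=
  Quot.finite _

/-- the circle count of a smoothing, via the off-relation at `x` plus a double merge. -/
theorem nCircles_eq_offRel (s : D.X → Bool) (x : D.X)
    (d₁ d₂ d₃ d₄ : D.Dart)
    (hs1 : smoothStep D s d₁ = d₂) (hs2 : smoothStep D s d₂ = d₁)
    (hs3 : smoothStep D s d₃ = d₄) (hs4 : smoothStep D s d₄ = d₃)
    (hall : ∀ d : D.Dart, d.1 = x → d = d₁ ∨ d = d₂ ∨ d = d₃ ∨ d = d₄) :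
    nCircles D s +
      d2 (Quot.mk (offRel D s x) d₁) (Quot.mk _ d₂) (Quot.mk _ d₃) (Quot.mk _ d₄)
      = Nat.card (Quot (offRel D s x)) := by
  classical
  set A := Quot.mk (offRel D s x) d₁
  set B := Quot.mk (offRel D s x) d₂
  set C := Quot.mk (offRel D s x) d₃
  set E := Quot.mk (offRel D s x) d₄
  have hOC : ∀ a b : D.Dart, offRel D s x a b → circGen D s a b := by
    rintro a b (h | ⟨-, h⟩)
    · exact Or.inl h
    · exact Or.inr h
  -- map from circles to double-merged quotient
  have hf : ∀ u v : D.Dart, circGen D s u v →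
      Quot.mk (rel2 A B C E) (Quot.mk (offRel D s x) u)
        = Quot.mk (rel2 A B C E) (Quot.mk (offRel D s x) v) := by
    rintro u v (h | h)
    · exact congrArg _ (Quot.sound (Or.inl h))
    · by_cases hu : u.1 = x
      · rcases hall u hu with rfl | rfl | rfl | rfl
        · rw [hs1] at h; subst h
          exact Quot.sound (r := rel2 A B C E) (Or.inl ⟨rfl, rfl⟩)
        · rw [hs2] at h; subst h
          exact (Quot.sound (r := rel2 A B C E) (Or.inl ⟨rfl, rfl⟩)).symm
        · rw [hs3] at h; subst h
          exact Quot.sound (r := rel2 A B C E) (Or.inr ⟨rfl, rfl⟩)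
        · rw [hs4] at h; subst h
          exact (Quot.sound (r := rel2 A B C E) (Or.inr ⟨rfl, rfl⟩)).symm
      · exact congrArg _ (Quot.sound (Or.inr ⟨hu, h⟩))
  have e : Quot (circGen D s) ≃ Quot (rel2 A B C E) :=
  { toFun := Quot.lift (fun u => Quot.mk (rel2 A B C E) (Quot.mk (offRel D s x) u)) hf
    invFun := Quot.lift
      (Quot.lift (fun u => Quot.mk (circGen D s) u)
        (fun u v h => Quot.sound (hOC u v h)))
      (by
        rintro u v (⟨rfl, rfl⟩ | ⟨rfl, rfl⟩)
        · exact Quot.sound (Or.inr hs1.symm)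
        · exact Quot.sound (Or.inr hs3.symm))
    left_inv := by
      apply Quot.ind
      intro u
      rfl
    right_inv := by
      apply Quot.ind
      apply Quot.ind
      intro u
      rfl }
  have := card_quot_rel2 A B C E
  rw [← this]
  congr 1
  exact Nat.card_congr e

/-- the four darts at a crossing. -/
theorem dart_cases (x : D.X) :
    ∀ d : D.Dart, d.1 = x →
      d = (x, 0) ∨ d = (x, 1) ∨ d = (x, 2) ∨ d = (x, 3) := by
  rintro ⟨y, i⟩ rfl
  fin_cases i
  · exact Or.inl rfl
  · exact Or.inr (Or.inl rfl)
  · exact Or.inr (Or.inr (Or.inl rfl))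
  · exact Or.inr (Or.inr (Or.inr rfl))

theorem smooth_A (s : D.X → Bool) (x : D.X) (h : s x = false) :
    smoothStep D s (x, 0) = (x, 1) ∧ smoothStep D s (x, 1) = (x, 0) ∧
    smoothStep D s (x, 2) = (x, 3) ∧ smoothStep D s (x, 3) = (x, 2) := by
  unfold smoothStep
  rw [h]
  refine ⟨?_, ?_, ?_, ?_⟩ <;> simp <;> decide

theorem smooth_B (s : D.X → Bool) (x : D.X) (h : s x = true) :
    smoothStep D s (x, 1) = (x, 2) ∧ smoothStep D s (x, 2) = (x, 1) ∧
    smoothStep D s (x, 3) = (x, 0) ∧ smoothStep D s (x, 0) = (x, 3) := by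
  unfold smoothStep
  rw [h]
  refine ⟨?_, ?_, ?_, ?_⟩ <;> simp <;> decide

/-- circle count for an A-crossing. -/
theorem nCircles_A (s : D.X → Bool) (x : D.X) (h : s x = false) :
    nCircles D s +
      d2 (Quot.mk (offRel D s x) (x, 0)) (Quot.mk _ (x, 1)) (Quot.mk _ (x, 2))
        (Quot.mk _ (x, 3))
      = Nat.card (Quot (offRel D s x)) := by
  obtain ⟨h1, h2, h3, h4⟩ := smooth_A D s x h
  exact nCircles_eq_offRel D s x _ _ _ _ h1 h2 h3 h4 (dart_cases D x)

/-- circle count for a B-crossing. -/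
theorem nCircles_B (s : D.X → Bool) (x : D.X) (h : s x = true) :
    nCircles D s +
      d2 (Quot.mk (offRel D s x) (x, 1)) (Quot.mk _ (x, 2)) (Quot.mk _ (x, 3))
        (Quot.mk _ (x, 0))
      = Nat.card (Quot (offRel D s x)) := by
  obtain ⟨h1, h2, h3, h4⟩ := smooth_B D s x h
  refine nCircles_eq_offRel D s x _ _ _ _ h1 h2 h3 h4 ?_
  intro d hd
  rcases dart_cases D x d hd with rfl | rfl | rfl | rfl
  · exact Or.inr (Or.inr (Or.inr rfl))
  · exact Or.inl rfl
  · exact Or.inr (Or.inl rfl)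
  · exact Or.inr (Or.inr (Or.inl rfl))

/-- Flipping one crossing from A to B changes the circle count by at most one, upward. -/
theorem nCircles_flip_le (s : D.X → Bool) (x : D.X) (hx : s x = true) :
    nCircles D s ≤ nCircles D (Function.update s x false) + 1 := by
  classical
  set s' := Function.update s x false with hs'
  have hoff : offRel D s x = offRel D s' x :=
    offRel_congr D s s' x (fun y hy => by
      rw [hs', Function.update_of_ne hy])
  have hsx' : s' x = false := by rw [hs']; simp
  have hB := nCircles_B D s x hx
  have hA := nCircles_A D s' x hsx'
  rw [← hoff] at hA
  set α := Quot.mk (offRel D s x) (x, 0)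
  set β := Quot.mk (offRel D s x) (x, 1)
  set γ := Quot.mk (offRel D s x) (x, 2)
  set δ := Quot.mk (offRel D s x) (x, 3)
  have h1 : d2 β γ δ α ≤ 2 := d2_le_two _ _ _ _
  have h2 : d2 α β γ δ ≤ 2 := d2_le_two _ _ _ _
  by_cases h0 : d2 β γ δ α = 0
  · have := d2_flip α β γ δ h0
    omega
  · omega
end OffRel
/-! ### The standard negative pretzel diagram -/

@[simp] theorem blSlot_false : blSlot false = 0 := rfl
@[simp] theorem brSlot_false : brSlot false = 1 := rfl
@[simp] theorem trSlot_false : trSlot false = 2 := rfl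
@[simp] theorem tlSlot_false : tlSlot false = 3 := rfl

section Pretzel
variable {p q r : ℕ} {D : Diagram}

/-- bundled data of a standard negative pretzel diagram. -/
structure PW (p q r : ℕ) (D : Diagram) where
  hp : 0 < p
  hq : 0 < q
  hr : 0 < r
  φ : (Fin p ⊕ (Fin q ⊕ Fin r)) ≃ D.X
  tP : TwistRegion D p false (fun j => φ (Sum.inl j))
  tQ : TwistRegion D q false (fun j => φ (Sum.inr (Sum.inl j)))
  tR : TwistRegion D r false (fun j => φ (Sum.inr (Sum.inr j)))
  e1 : D.θ (φ (Sum.inl ⟨p - 1, by omega⟩), trSlot false)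
      = (φ (Sum.inr (Sum.inl ⟨q - 1, by omega⟩)), tlSlot false)
  e2 : D.θ (φ (Sum.inr (Sum.inl ⟨q - 1, by omega⟩)), trSlot false)
      = (φ (Sum.inr (Sum.inr ⟨r - 1, by omega⟩)), tlSlot false)
  e3 : D.θ (φ (Sum.inl ⟨p - 1, by omega⟩), tlSlot false)
      = (φ (Sum.inr (Sum.inr ⟨r - 1, by omega⟩)), trSlot false)
  e4 : D.θ (φ (Sum.inl ⟨0, hp⟩), brSlot false)
      = (φ (Sum.inr (Sum.inl ⟨0, hq⟩)), blSlot false)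
  e5 : D.θ (φ (Sum.inr (Sum.inl ⟨0, hq⟩)), brSlot false)
      = (φ (Sum.inr (Sum.inr ⟨0, hr⟩)), blSlot false)
  e6 : D.θ (φ (Sum.inl ⟨0, hp⟩), blSlot false)
      = (φ (Sum.inr (Sum.inr ⟨0, hr⟩)), brSlot false)

namespace PW
variable (W : PW p q r D)

def vP (j : ℕ) (h : j < p) : D.X := W.φ (Sum.inl ⟨j, h⟩)
def vQ (j : ℕ) (h : j < q) : D.X := W.φ (Sum.inr (Sum.inl ⟨j, h⟩))
def vR (j : ℕ) (h : j < r) : D.X := W.φ (Sum.inr (Sum.inr ⟨j, h⟩))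

theorem vP_congr {j j' : ℕ} (e : j = j') (h : j < p) (h' : j' < p) :
    W.vP j h = W.vP j' h' := by subst e; rfl
theorem vQ_congr {j j' : ℕ} (e : j = j') (h : j < q) (h' : j' < q) :
    W.vQ j h = W.vQ j' h' := by subst e; rfl
theorem vR_congr {j j' : ℕ} (e : j = j') (h : j < r) (h' : j' < r) :
    W.vR j h = W.vR j' h' := by subst e; rfl

/- internal twist-region edges -/
theorem θP3 (j j' : ℕ) (h : j < p) (h' : j' < p) (e : j' = j + 1) :
    D.θ (W.vP j h, 3) = (W.vP j' h', 0) := by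
  subst e
  have := (W.tP j h h').1
  simpa [vP] using this
theorem θP2 (j j' : ℕ) (h : j < p) (h' : j' < p) (e : j' = j + 1) :
    D.θ (W.vP j h, 2) = (W.vP j' h', 1) := by
  subst e
  have := (W.tP j h h').2
  simpa [vP] using this
theorem θQ3 (j j' : ℕ) (h : j < q) (h' : j' < q) (e : j' = j + 1) :
    D.θ (W.vQ j h, 3) = (W.vQ j' h', 0) := by
  subst e
  have := (W.tQ j h h').1
  simpa [vQ] using this
theorem θQ2 (j j' : ℕ) (h : j < q) (h' : j' < q) (e : j' = j + 1) :
    D.θ (W.vQ j h, 2) = (W.vQ j' h', 1) := by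
  subst e
  have := (W.tQ j h h').2
  simpa [vQ] using this
theorem θR3 (j j' : ℕ) (h : j < r) (h' : j' < r) (e : j' = j + 1) :
    D.θ (W.vR j h, 3) = (W.vR j' h', 0) := by
  subst e
  have := (W.tR j h h').1
  simpa [vR] using this
theorem θR2 (j j' : ℕ) (h : j < r) (h' : j' < r) (e : j' = j + 1) :
    D.θ (W.vR j h, 2) = (W.vR j' h', 1) := by
  subst e
  have := (W.tR j h h').2
  simpa [vR] using this

theorem θP0 (j j' : ℕ) (h : j < p) (h' : j' < p) (e : j = j' + 1) :
    D.θ (W.vP j h, 0) = (W.vP j' h', 3) := by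
  rw [← W.θP3 j' j h' h e]; exact D.invol _
theorem θP1 (j j' : ℕ) (h : j < p) (h' : j' < p) (e : j = j' + 1) :
    D.θ (W.vP j h, 1) = (W.vP j' h', 2) := by
  rw [← W.θP2 j' j h' h e]; exact D.invol _
theorem θQ0 (j j' : ℕ) (h : j < q) (h' : j' < q) (e : j = j' + 1) :
    D.θ (W.vQ j h, 0) = (W.vQ j' h', 3) := by
  rw [← W.θQ3 j' j h' h e]; exact D.invol _
theorem θQ1 (j j' : ℕ) (h : j < q) (h' : j' < q) (e : j = j' + 1) :
    D.θ (W.vQ j h, 1) = (W.vQ j' h', 2) := by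
  rw [← W.θQ2 j' j h' h e]; exact D.invol _
theorem θR0 (j j' : ℕ) (h : j < r) (h' : j' < r) (e : j = j' + 1) :
    D.θ (W.vR j h, 0) = (W.vR j' h', 3) := by
  rw [← W.θR3 j' j h' h e]; exact D.invol _
theorem θR1 (j j' : ℕ) (h : j < r) (h' : j' < r) (e : j = j' + 1) :
    D.θ (W.vR j h, 1) = (W.vR j' h', 2) := by
  rw [← W.θR2 j' j h' h e]; exact D.invol _

/- closure edges -/
theorem cPt2 (h : p - 1 < p) (h' : q - 1 < q) :
    D.θ (W.vP (p-1) h, 2) = (W.vQ (q-1) h', 3) := by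
  have := W.e1; simpa [vP, vQ] using this
theorem cQt2 (h : q - 1 < q) (h' : r - 1 < r) :
    D.θ (W.vQ (q-1) h, 2) = (W.vR (r-1) h', 3) := by
  have := W.e2; simpa [vQ, vR] using this
theorem cPt3 (h : p - 1 < p) (h' : r - 1 < r) :
    D.θ (W.vP (p-1) h, 3) = (W.vR (r-1) h', 2) := by
  have := W.e3; simpa [vP, vR] using this
theorem cQt3 (h : q - 1 < q) (h' : p - 1 < p) :
    D.θ (W.vQ (q-1) h, 3) = (W.vP (p-1) h', 2) := by
  rw [← W.cPt2 h' h]; exact D.invol _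
theorem cRt3 (h : r - 1 < r) (h' : q - 1 < q) :
    D.θ (W.vR (r-1) h, 3) = (W.vQ (q-1) h', 2) := by
  rw [← W.cQt2 h' h]; exact D.invol _
theorem cRt2 (h : r - 1 < r) (h' : p - 1 < p) :
    D.θ (W.vR (r-1) h, 2) = (W.vP (p-1) h', 3) := by
  rw [← W.cPt3 h' h]; exact D.invol _
theorem cP1 (h : 0 < p) (h' : 0 < q) :
    D.θ (W.vP 0 h, 1) = (W.vQ 0 h', 0) := by
  have := W.e4; simpa [vP, vQ] using this
theorem cQ1 (h : 0 < q) (h' : 0 < r) :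
    D.θ (W.vQ 0 h, 1) = (W.vR 0 h', 0) := by
  have := W.e5; simpa [vQ, vR] using this
theorem cP0 (h : 0 < p) (h' : 0 < r) :
    D.θ (W.vP 0 h, 0) = (W.vR 0 h', 1) := by
  have := W.e6; simpa [vP, vR] using this
theorem cQ0 (h : 0 < q) (h' : 0 < p) :
    D.θ (W.vQ 0 h, 0) = (W.vP 0 h', 1) := by
  rw [← W.cP1 h' h]; exact D.invol _
theorem cR0 (h : 0 < r) (h' : 0 < q) :
    D.θ (W.vR 0 h, 0) = (W.vQ 0 h', 1) := by
  rw [← W.cQ1 h' h]; exact D.invol _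
theorem cR1 (h : 0 < r) (h' : 0 < p) :
    D.θ (W.vR 0 h, 1) = (W.vP 0 h', 0) := by
  rw [← W.cP0 h' h]; exact D.invol _

end PW
end Pretzel

section Labels

def ind4 (i : Fin 4) : ℕ := if 2 ≤ i.val then 1 else 0

def labP (p q r ℓ : ℕ) : ℕ := if ℓ = 0 then 0 else if ℓ = p then p+q+r-2 else ℓ
def labQ (p q r ℓ : ℕ) : ℕ := if ℓ = 0 then 0 else if ℓ = q then p+q+r-2 else p-1+ℓ
def labR (p q r ℓ : ℕ) : ℕ := if ℓ = 0 then 0 else if ℓ = r then p+q+r-2 else p+q-2+ℓ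

def regLab (p q r : ℕ) : (Fin p ⊕ (Fin q ⊕ Fin r)) → ℕ → ℕ
  | Sum.inl j, i => labP p q r (j.val + i)
  | Sum.inr (Sum.inl k), i => labQ p q r (k.val + i)
  | Sum.inr (Sum.inr l), i => labR p q r (l.val + i)

theorem fmk0 (h : (0:ℕ) < 4) : (⟨0, h⟩ : Fin 4) = (0 : Fin 4) := rfl
theorem fmk1 (h : (1:ℕ) < 4) : (⟨1, h⟩ : Fin 4) = (1 : Fin 4) := rfl
theorem fmk2 (h : (2:ℕ) < 4) : (⟨2, h⟩ : Fin 4) = (2 : Fin 4) := rfl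
theorem fmk3 (h : (3:ℕ) < 4) : (⟨3, h⟩ : Fin 4) = (3 : Fin 4) := rfl

end Labels

namespace PW
variable {p q r : ℕ} {D : Diagram} (W : PW p q r D)

def lev (d : D.Dart) : ℕ := regLab p q r (W.φ.symm d.1) (ind4 d.2)

theorem lev_vP (j : ℕ) (h : j < p) (i : Fin 4) :
    W.lev (W.vP j h, i) = labP p q r (j + ind4 i) := by
  unfold lev vP
  rw [Equiv.symm_apply_apply]
  rfl
theorem lev_vQ (j : ℕ) (h : j < q) (i : Fin 4) :
    W.lev (W.vQ j h, i) = labQ p q r (j + ind4 i) := by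
  unfold lev vQ
  rw [Equiv.symm_apply_apply]
  rfl
theorem lev_vR (j : ℕ) (h : j < r) (i : Fin 4) :
    W.lev (W.vR j h, i) = labR p q r (j + ind4 i) := by
  unfold lev vR
  rw [Equiv.symm_apply_apply]
  rfl

theorem lev_lt (d : D.Dart) : W.lev d < p + q + r - 1 := by
  have hp := W.hp; have hq := W.hq; have hr := W.hr
  obtain ⟨y, i⟩ := d
  show regLab p q r (W.φ.symm y) (ind4 i) < _
  rcases hz : W.φ.symm y with j | k | l
  · have hj := j.isLt
    have hi : ind4 i ≤ 1 := by unfold ind4; split_ifs <;> omega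
    show labP p q r _ < _
    unfold labP
    split_ifs <;> omega
  · have hk := k.isLt
    have hi : ind4 i ≤ 1 := by unfold ind4; split_ifs <;> omega
    show labQ p q r _ < _
    unfold labQ
    split_ifs <;> omega
  · have hl := l.isLt
    have hi : ind4 i ≤ 1 := by unfold ind4; split_ifs <;> omega
    show labR p q r _ < _
    unfold labR
    split_ifs <;> omega

/-- levels are invariant under the edges of the diagram. -/
theorem lev_theta (d : D.Dart) : W.lev (D.θ d) = W.lev d := by
  have hp := W.hp; have hq := W.hq; have hr := W.hr
  obtain ⟨y, i⟩ := d
  obtain ⟨z, rfl⟩ : ∃ z, y = W.φ z := ⟨W.φ.symm y, (W.φ.apply_symm_apply y).symm⟩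
  rcases z with ⟨j, hj⟩ | ⟨k, hk⟩ | ⟨l, hl⟩
  · -- region P
    have hy : W.φ (Sum.inl ⟨j, hj⟩) = W.vP j hj := rfl
    rw [hy]
    fin_cases i <;> simp only [fmk0, fmk1, fmk2, fmk3]
    · by_cases h0 : j = 0
      · subst h0
        rw [W.cP0 hj hr, W.lev_vR, W.lev_vP]
        simp [labP, labR, ind4]
      · rw [W.θP0 j (j-1) hj (by omega) (by omega), W.lev_vP, W.lev_vP]
        have e1 : ind4 (3 : Fin 4) = 1 := rfl
        have e2 : ind4 (0 : Fin 4) = 0 := rfl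
        rw [e1, e2]
        congr 1
        omega
    · by_cases h0 : j = 0
      · subst h0
        rw [W.cP1 hj hq, W.lev_vQ, W.lev_vP]
        simp [labP, labQ, ind4]
      · rw [W.θP1 j (j-1) hj (by omega) (by omega), W.lev_vP, W.lev_vP]
        congr 1
        show (j-1) + 1 = j + 0
        omega
    · by_cases h0 : j + 1 = p
      · rw [W.vP_congr (show j = p - 1 by omega) hj (by omega),
          W.cPt2 (by omega) (by omega), W.lev_vQ, W.lev_vP]
        show labQ p q r (q - 1 + 1) = labP p q r (p - 1 + 1)
        unfold labP labQ
        split_ifs <;> omega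
      · rw [W.θP2 j (j+1) hj (by omega) rfl, W.lev_vP, W.lev_vP]
        rfl
    · by_cases h0 : j + 1 = p
      · rw [W.vP_congr (show j = p - 1 by omega) hj (by omega),
          W.cPt3 (by omega) (by omega), W.lev_vR, W.lev_vP]
        show labR p q r (r - 1 + 1) = labP p q r (p - 1 + 1)
        unfold labP labR
        split_ifs <;> omega
      · rw [W.θP3 j (j+1) hj (by omega) rfl, W.lev_vP, W.lev_vP]
        show labP p q r ((j+1) + 0) = labP p q r (j + 1)
        rfl
  · -- region Q
    have hy : W.φ (Sum.inr (Sum.inl ⟨k, hk⟩)) = W.vQ k hk := rfl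
    rw [hy]
    fin_cases i <;> simp only [fmk0, fmk1, fmk2, fmk3]
    · by_cases h0 : k = 0
      · subst h0
        rw [W.cQ0 hk hp, W.lev_vP, W.lev_vQ]
        simp [labP, labQ, ind4]
      · rw [W.θQ0 k (k-1) hk (by omega) (by omega), W.lev_vQ, W.lev_vQ]
        congr 1
        show (k-1) + 1 = k + 0
        omega
    · by_cases h0 : k = 0
      · subst h0
        rw [W.cQ1 hk hr, W.lev_vR, W.lev_vQ]
        simp [labQ, labR, ind4]
      · rw [W.θQ1 k (k-1) hk (by omega) (by omega), W.lev_vQ, W.lev_vQ]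
        congr 1
        show (k-1) + 1 = k + 0
        omega
    · by_cases h0 : k + 1 = q
      · rw [W.vQ_congr (show k = q - 1 by omega) hk (by omega),
          W.cQt2 (by omega) (by omega), W.lev_vR, W.lev_vQ]
        show labR p q r (r - 1 + 1) = labQ p q r (q - 1 + 1)
        unfold labQ labR
        split_ifs <;> omega
      · rw [W.θQ2 k (k+1) hk (by omega) rfl, W.lev_vQ, W.lev_vQ]
        rfl
    · by_cases h0 : k + 1 = q
      · rw [W.vQ_congr (show k = q - 1 by omega) hk (by omega),
          W.cQt3 (by omega) (by omega), W.lev_vP, W.lev_vQ]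
        show labP p q r (p - 1 + 1) = labQ p q r (q - 1 + 1)
        unfold labP labQ
        split_ifs <;> omega
      · rw [W.θQ3 k (k+1) hk (by omega) rfl, W.lev_vQ, W.lev_vQ]
        show labQ p q r ((k+1) + 0) = labQ p q r (k + 1)
        rfl
  · -- region R
    have hy : W.φ (Sum.inr (Sum.inr ⟨l, hl⟩)) = W.vR l hl := rfl
    rw [hy]
    fin_cases i <;> simp only [fmk0, fmk1, fmk2, fmk3]
    · by_cases h0 : l = 0
      · subst h0
        rw [W.cR0 hl hq, W.lev_vQ, W.lev_vR]
        simp [labQ, labR, ind4]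
      · rw [W.θR0 l (l-1) hl (by omega) (by omega), W.lev_vR, W.lev_vR]
        congr 1
        show (l-1) + 1 = l + 0
        omega
    · by_cases h0 : l = 0
      · subst h0
        rw [W.cR1 hl hp, W.lev_vP, W.lev_vR]
        simp [labP, labR, ind4]
      · rw [W.θR1 l (l-1) hl (by omega) (by omega), W.lev_vR, W.lev_vR]
        congr 1
        show (l-1) + 1 = l + 0
        omega
    · by_cases h0 : l + 1 = r
      · rw [W.vR_congr (show l = r - 1 by omega) hl (by omega),
          W.cRt2 (by omega) (by omega), W.lev_vP, W.lev_vR]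
        show labP p q r (p - 1 + 1) = labR p q r (r - 1 + 1)
        unfold labP labR
        split_ifs <;> omega
      · rw [W.θR2 l (l+1) hl (by omega) rfl, W.lev_vR, W.lev_vR]
        rfl
    · by_cases h0 : l + 1 = r
      · rw [W.vR_congr (show l = r - 1 by omega) hl (by omega),
          W.cRt3 (by omega) (by omega), W.lev_vQ, W.lev_vR]
        show labQ p q r (q - 1 + 1) = labR p q r (r - 1 + 1)
        unfold labQ labR
        split_ifs <;> omega
      · rw [W.θR3 l (l+1) hl (by omega) rfl, W.lev_vR, W.lev_vR]
        show labR p q r ((l+1) + 0) = labR p q r (l + 1)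
        rfl

/-- levels are invariant under smoothing arcs (of any state). -/
theorem lev_smooth (d : D.Dart) :
    W.lev (smoothStep D (fun _ => false) d) = W.lev d := by
  obtain ⟨y, i⟩ := d
  have key : ind4 (smoothStep D (fun _ => false) (y, i)).2 = ind4 i := by
    fin_cases i <;> simp [smoothStep, ind4] <;> decide
  show regLab p q r (W.φ.symm (smoothStep D (fun _ => false) (y,i)).1)
      (ind4 (smoothStep D (fun _ => false) (y,i)).2)
      = regLab p q r (W.φ.symm y) (ind4 i)
  rw [key]
  rfl

end PW

/-- the all-A state. -/
abbrev stA (D : Diagram) : D.X → Bool := fun _ => false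

namespace PW
variable {p q r : ℕ} {D : Diagram} (W : PW p q r D)

@[simp] theorem ind4_0 : ind4 (0 : Fin 4) = 0 := rfl
@[simp] theorem ind4_1 : ind4 (1 : Fin 4) = 0 := rfl
@[simp] theorem ind4_2 : ind4 (2 : Fin 4) = 1 := rfl
@[simp] theorem ind4_3 : ind4 (3 : Fin 4) = 1 := rfl

def canon (k : ℕ) : D.Dart :=
  if h1 : k = 0 then (W.vP 0 W.hp, 0)
  else if h2 : k < p then (W.vP k h2, 0)
  else if h3 : k ≤ p + q - 2 then
    (W.vQ (k - (p-1)) (by have := W.hp; have := W.hq; have := W.hr; omega), 0)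
  else if h4 : k ≤ p + q + r - 3 then
    (W.vR (k - (p+q-2)) (by have := W.hp; have := W.hq; have := W.hr; omega), 0)
  else (W.vP (p-1) (by have := W.hp; omega), 2)

theorem canon0 : W.canon 0 = (W.vP 0 W.hp, 0) := by
  unfold canon; rw [dif_pos rfl]

theorem canonP (j : ℕ) (h0 : j ≠ 0) (hj : j < p) : W.canon j = (W.vP j hj, 0) := by
  unfold canon; rw [dif_neg h0, dif_pos hj]

theorem canonQ (k : ℕ) (h0 : 1 ≤ k) (hk : k ≤ q - 1) (hk' : k < q) :
    W.canon (p-1+k) = (W.vQ k hk', 0) := by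
  have hp := W.hp; have hq := W.hq; have hr := W.hr
  unfold canon
  rw [dif_neg (by omega), dif_neg (by omega), dif_pos (by omega)]
  exact congrArg (fun z => (z, (0 : Fin 4))) (W.vQ_congr (by omega) _ _)

theorem canonR (l : ℕ) (h0 : 1 ≤ l) (hl : l ≤ r - 1) (hl' : l < r) :
    W.canon (p+q-2+l) = (W.vR l hl', 0) := by
  have hp := W.hp; have hq := W.hq; have hr := W.hr
  unfold canon
  rw [dif_neg (by omega), dif_neg (by omega), dif_neg (by omega), dif_pos (by omega)]
  exact congrArg (fun z => (z, (0 : Fin 4))) (W.vR_congr (by omega) _ _)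

theorem canonTop (h : p - 1 < p) : W.canon (p+q+r-2) = (W.vP (p-1) h, 2) := by
  have hp := W.hp; have hq := W.hq; have hr := W.hr
  unfold canon
  rw [dif_neg (by omega), dif_neg (by omega), dif_neg (by omega), dif_neg (by omega)]

theorem lev_canon (k : ℕ) (hk : k < p + q + r - 1) : W.lev (W.canon k) = k := by
  have hp := W.hp; have hq := W.hq; have hr := W.hr
  unfold canon
  split_ifs with h1 h2 h3 h4
  · rw [W.lev_vP]
    show labP p q r (0 + ind4 0) = k
    unfold labP; rw [ind4_0]; split_ifs <;> first | contradiction | omega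
  · rw [W.lev_vP]
    show labP p q r (k + ind4 0) = k
    unfold labP; rw [ind4_0]; split_ifs <;> first | contradiction | omega
  · rw [W.lev_vQ]
    show labQ p q r (k - (p-1) + ind4 0) = k
    unfold labQ; rw [ind4_0]; split_ifs <;> first | contradiction | omega
  · rw [W.lev_vR]
    show labR p q r (k - (p+q-2) + ind4 0) = k
    unfold labR; rw [ind4_0]; split_ifs <;> first | contradiction | omega
  · rw [W.lev_vP]
    show labP p q r (p - 1 + ind4 2) = k
    unfold labP; rw [ind4_2]; split_ifs <;> first | contradiction | omega

/- quotient step lemmas in the circle quotient -/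
theorem mkθ (s : D.X → Bool) (a : D.Dart) :
    Quot.mk (circGen D s) a = Quot.mk _ (D.θ a) := Quot.sound (Or.inl rfl)

theorem mkArc01 (y : D.X) :
    Quot.mk (circGen D (stA D)) (y, 0) = Quot.mk _ (y, 1) :=
  Quot.sound (Or.inr (smooth_A D (stA D) y rfl).1.symm)

theorem mkArc23 (y : D.X) :
    Quot.mk (circGen D (stA D)) (y, 2) = Quot.mk _ (y, 3) :=
  Quot.sound (Or.inr (smooth_A D (stA D) y rfl).2.2.1.symm)

theorem reachP0 (j : ℕ) (hj : j < p) :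
    Quot.mk (circGen D (stA D)) (W.vP j hj, 0) = Quot.mk _ (W.canon (labP p q r j)) := by
  have hp := W.hp; have hq := W.hq; have hr := W.hr
  by_cases h0 : j = 0
  · subst h0
    have hlab : labP p q r 0 = 0 := by unfold labP; simp
    rw [hlab, W.canon0]
  · have hlab : labP p q r j = j := by unfold labP; split_ifs <;> first | contradiction | omega
    rw [hlab, W.canonP j h0 hj]

theorem reachQ0 (k : ℕ) (hk : k < q) :
    Quot.mk (circGen D (stA D)) (W.vQ k hk, 0) = Quot.mk _ (W.canon (labQ p q r k)) := by
  have hp := W.hp; have hq := W.hq; have hr := W.hr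
  by_cases h0 : k = 0
  · subst h0
    have hlab : labQ p q r 0 = 0 := by unfold labQ; simp
    rw [hlab, W.canon0]
    calc Quot.mk (circGen D (stA D)) (W.vQ 0 hk, 0)
        = Quot.mk _ (D.θ (W.vQ 0 hk, 0)) := mkθ _ _
      _ = Quot.mk _ (W.vP 0 W.hp, 1) := by rw [W.cQ0 hk W.hp]
      _ = Quot.mk _ (W.vP 0 W.hp, 0) := (mkArc01 _).symm
  · have hlab : labQ p q r k = p - 1 + k := by unfold labQ; split_ifs <;> first | contradiction | omega
    rw [hlab, W.canonQ k (by omega) (by omega) hk]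

theorem reachR0 (l : ℕ) (hl : l < r) :
    Quot.mk (circGen D (stA D)) (W.vR l hl, 0) = Quot.mk _ (W.canon (labR p q r l)) := by
  have hp := W.hp; have hq := W.hq; have hr := W.hr
  by_cases h0 : l = 0
  · subst h0
    have hlab : labR p q r 0 = 0 := by unfold labR; simp
    have hlab' : labQ p q r 0 = 0 := by unfold labQ; simp
    rw [hlab]
    calc Quot.mk (circGen D (stA D)) (W.vR 0 hl, 0)
        = Quot.mk _ (D.θ (W.vR 0 hl, 0)) := mkθ _ _
      _ = Quot.mk _ (W.vQ 0 W.hq, 1) := by rw [W.cR0 hl W.hq]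
      _ = Quot.mk _ (W.vQ 0 W.hq, 0) := (mkArc01 _).symm
      _ = Quot.mk _ (W.canon (labQ p q r 0)) := W.reachQ0 0 W.hq
      _ = Quot.mk _ (W.canon 0) := by rw [hlab']
  · have hlab : labR p q r l = p + q - 2 + l := by unfold labR; split_ifs <;> first | contradiction | omega
    rw [hlab, W.canonR l (by omega) (by omega) hl]

theorem reachP2 (j : ℕ) (hj : j < p) :
    Quot.mk (circGen D (stA D)) (W.vP j hj, 2) = Quot.mk _ (W.canon (labP p q r (j+1))) := by
  have hp := W.hp; have hq := W.hq; have hr := W.hr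
  by_cases htop : j + 1 = p
  · have hlab : labP p q r (j+1) = p+q+r-2 := by unfold labP; split_ifs <;> first | contradiction | omega
    rw [hlab, W.canonTop (by omega)]
    rw [W.vP_congr (show j = p - 1 by omega) hj (by omega)]
  · have hlab : labP p q r (j+1) = j+1 := by unfold labP; split_ifs <;> first | contradiction | omega
    rw [hlab]
    calc Quot.mk (circGen D (stA D)) (W.vP j hj, 2)
        = Quot.mk _ (W.vP j hj, 3) := mkArc23 _
      _ = Quot.mk _ (D.θ (W.vP j hj, 3)) := mkθ _ _
      _ = Quot.mk _ (W.vP (j+1) (by omega), 0) := by rw [W.θP3 j (j+1) hj (by omega) rfl]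
      _ = Quot.mk _ (W.canon (labP p q r (j+1))) := by
            rw [W.reachP0 (j+1) (by omega)]
      _ = Quot.mk _ (W.canon (j+1)) := by rw [hlab]

theorem reachQ2 (k : ℕ) (hk : k < q) :
    Quot.mk (circGen D (stA D)) (W.vQ k hk, 2) = Quot.mk _ (W.canon (labQ p q r (k+1))) := by
  have hp := W.hp; have hq := W.hq; have hr := W.hr
  by_cases htop : k + 1 = q
  · have hlab : labQ p q r (k+1) = p+q+r-2 := by unfold labQ; split_ifs <;> first | contradiction | omega
    rw [hlab, W.canonTop (by omega)]
    calc Quot.mk (circGen D (stA D)) (W.vQ k hk, 2)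
        = Quot.mk _ (W.vQ k hk, 3) := mkArc23 _
      _ = Quot.mk _ (D.θ (W.vQ k hk, 3)) := mkθ _ _
      _ = Quot.mk _ (W.vP (p-1) (by omega), 2) := by
            rw [W.vQ_congr (show k = q - 1 by omega) hk (by omega),
              W.cQt3 (by omega) (by omega)]
  · have hlab : labQ p q r (k+1) = p - 1 + (k+1) := by unfold labQ; split_ifs <;> first | contradiction | omega
    calc Quot.mk (circGen D (stA D)) (W.vQ k hk, 2)
        = Quot.mk _ (W.vQ k hk, 3) := mkArc23 _
      _ = Quot.mk _ (D.θ (W.vQ k hk, 3)) := mkθ _ _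
      _ = Quot.mk _ (W.vQ (k+1) (by omega), 0) := by rw [W.θQ3 k (k+1) hk (by omega) rfl]
      _ = Quot.mk _ (W.canon (labQ p q r (k+1))) := W.reachQ0 (k+1) (by omega)

theorem reachR2 (l : ℕ) (hl : l < r) :
    Quot.mk (circGen D (stA D)) (W.vR l hl, 2) = Quot.mk _ (W.canon (labR p q r (l+1))) := by
  have hp := W.hp; have hq := W.hq; have hr := W.hr
  by_cases htop : l + 1 = r
  · have hlab : labR p q r (l+1) = p+q+r-2 := by unfold labR; split_ifs <;> first | contradiction | omega
    rw [hlab, W.canonTop (by omega)]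
    calc Quot.mk (circGen D (stA D)) (W.vR l hl, 2)
        = Quot.mk _ (D.θ (W.vR l hl, 2)) := mkθ _ _
      _ = Quot.mk _ (W.vP (p-1) (by omega), 3) := by
            rw [W.vR_congr (show l = r - 1 by omega) hl (by omega),
              W.cRt2 (by omega) (by omega)]
      _ = Quot.mk _ (W.vP (p-1) (by omega), 2) := (mkArc23 _).symm
  · have hlab : labR p q r (l+1) = p + q - 2 + (l+1) := by unfold labR; split_ifs <;> first | contradiction | omega
    calc Quot.mk (circGen D (stA D)) (W.vR l hl, 2)
        = Quot.mk _ (W.vR l hl, 3) := mkArc23 _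
      _ = Quot.mk _ (D.θ (W.vR l hl, 3)) := mkθ _ _
      _ = Quot.mk _ (W.vR (l+1) (by omega), 0) := by rw [W.θR3 l (l+1) hl (by omega) rfl]
      _ = Quot.mk _ (W.canon (labR p q r (l+1))) := W.reachR0 (l+1) (by omega)

/-- every dart reaches the canonical dart of its level. -/
theorem reach (d : D.Dart) :
    Quot.mk (circGen D (stA D)) d = Quot.mk _ (W.canon (W.lev d)) := by
  obtain ⟨y, i⟩ := d
  obtain ⟨z, rfl⟩ : ∃ z, y = W.φ z := ⟨W.φ.symm y, (W.φ.apply_symm_apply y).symm⟩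
  rcases z with ⟨j, hj⟩ | ⟨k, hk⟩ | ⟨l, hl⟩
  · have hy : W.φ (Sum.inl ⟨j, hj⟩) = W.vP j hj := rfl
    rw [hy]
    fin_cases i <;> simp only [fmk0, fmk1, fmk2, fmk3]
    · rw [W.lev_vP]
      exact W.reachP0 j hj
    · rw [W.lev_vP]
      exact ((mkArc01 _).symm).trans (W.reachP0 j hj)
    · rw [W.lev_vP]
      exact W.reachP2 j hj
    · rw [W.lev_vP]
      exact ((mkArc23 _).symm).trans (W.reachP2 j hj)
  · have hy : W.φ (Sum.inr (Sum.inl ⟨k, hk⟩)) = W.vQ k hk := rfl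
    rw [hy]
    fin_cases i <;> simp only [fmk0, fmk1, fmk2, fmk3]
    · rw [W.lev_vQ]
      exact W.reachQ0 k hk
    · rw [W.lev_vQ]
      exact ((mkArc01 _).symm).trans (W.reachQ0 k hk)
    · rw [W.lev_vQ]
      exact W.reachQ2 k hk
    · rw [W.lev_vQ]
      exact ((mkArc23 _).symm).trans (W.reachQ2 k hk)
  · have hy : W.φ (Sum.inr (Sum.inr ⟨l, hl⟩)) = W.vR l hl := rfl
    rw [hy]
    fin_cases i <;> simp only [fmk0, fmk1, fmk2, fmk3]
    · rw [W.lev_vR]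
      exact W.reachR0 l hl
    · rw [W.lev_vR]
      exact ((mkArc01 _).symm).trans (W.reachR0 l hl)
    · rw [W.lev_vR]
      exact W.reachR2 l hl
    · rw [W.lev_vR]
      exact ((mkArc23 _).symm).trans (W.reachR2 l hl)

include W in
/-- the all-A smoothing of the pretzel has `p+q+r-1` circles. -/
theorem card_circles_allA : nCircles D (stA D) = p + q + r - 1 := by
  have hresp : ∀ a b, circGen D (stA D) a b → W.lev a = W.lev b := by
    rintro a b (rfl | rfl)
    · exact (W.lev_theta a).symm
    · exact (W.lev_smooth a).symm
  have hbij : Function.Bijective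
      (Quot.lift (fun d => (⟨W.lev d, W.lev_lt d⟩ : {k : ℕ // k < p+q+r-1}))
        (fun a b h => Subtype.ext (hresp a b h)) :
        Circles D (stA D) → {k : ℕ // k < p+q+r-1}) := by
    constructor
    · intro u v
      induction u using Quot.ind with | _ a => ?_
      induction v using Quot.ind with | _ b => ?_
      intro h
      have hl : W.lev a = W.lev b := congrArg Subtype.val h
      rw [W.reach a, W.reach b, hl]
    · rintro ⟨k, hk⟩
      exact ⟨Quot.mk _ (W.canon k), Subtype.ext (W.lev_canon k hk)⟩
  unfold nCircles
  show Nat.card (Quot (circGen D (stA D))) = _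
  rw [Nat.card_congr (Equiv.ofBijective _ hbij),
    Nat.card_congr (Fin.equivSubtype (n := p+q+r-1)).symm,
    Nat.card_eq_fintype_card, Fintype.card_fin]

end PW

namespace PW
variable {p q r : ℕ} {D : Diagram} (W : PW p q r D)

theorem vPQ_ne (j : ℕ) (hj : j < p) (k : ℕ) (hk : k < q) : W.vP j hj ≠ W.vQ k hk := by
  unfold vP vQ; intro h; exact absurd (W.φ.injective h) (by simp)
theorem vPR_ne (j : ℕ) (hj : j < p) (l : ℕ) (hl : l < r) : W.vP j hj ≠ W.vR l hl := by
  unfold vP vR; intro h; exact absurd (W.φ.injective h) (by simp)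
theorem vQR_ne (k : ℕ) (hk : k < q) (l : ℕ) (hl : l < r) : W.vQ k hk ≠ W.vR l hl := by
  unfold vQ vR; intro h; exact absurd (W.φ.injective h) (by simp)
theorem vPP_ne (j : ℕ) (hj : j < p) (j' : ℕ) (hj' : j' < p) (h : j ≠ j') :
    W.vP j hj ≠ W.vP j' hj' := by
  unfold vP; intro e; exact h (by have := W.φ.injective e; simpa using this)
theorem vQQ_ne (j : ℕ) (hj : j < q) (j' : ℕ) (hj' : j' < q) (h : j ≠ j') :
    W.vQ j hj ≠ W.vQ j' hj' := by
  unfold vQ; intro e; exact h (by have := W.φ.injective e; simpa using this)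
theorem vRR_ne (j : ℕ) (hj : j < r) (j' : ℕ) (hj' : j' < r) (h : j ≠ j') :
    W.vR j hj ≠ W.vR j' hj' := by
  unfold vR; intro e; exact h (by have := W.φ.injective e; simpa using this)

theorem omkθ {s : D.X → Bool} {x : D.X} (a : D.Dart) :
    Quot.mk (offRel D s x) a = Quot.mk _ (D.θ a) := Quot.sound (Or.inl rfl)
theorem omk01 {x : D.X} (y : D.X) (hy : y ≠ x) :
    Quot.mk (offRel D (stA D) x) (y, 0) = Quot.mk _ (y, 1) :=
  Quot.sound (Or.inr ⟨hy, (smooth_A D (stA D) y rfl).1.symm⟩)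
theorem omk23 {x : D.X} (y : D.X) (hy : y ≠ x) :
    Quot.mk (offRel D (stA D) x) (y, 2) = Quot.mk _ (y, 3) :=
  Quot.sound (Or.inr ⟨hy, (smooth_A D (stA D) y rfl).2.2.1.symm⟩)

include W in
/-- in the all-A smoothing with the arcs at `x` removed, the two ends of the lower
arc at `x` are still connected. -/
theorem off_mk01 (x : D.X) :
    Quot.mk (offRel D (stA D) x) (x, 0) = Quot.mk _ (x, 1) := by
  have hp := W.hp; have hq := W.hq; have hr := W.hr
  obtain ⟨z, rfl⟩ : ∃ z, x = W.φ z := ⟨W.φ.symm x, (W.φ.apply_symm_apply x).symm⟩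
  rcases z with ⟨j, hj⟩ | ⟨k, hk⟩ | ⟨l, hl⟩
  · have hy : W.φ (Sum.inl ⟨j, hj⟩) = W.vP j hj := rfl
    rw [hy]
    by_cases h0 : j = 0
    · subst h0
      calc Quot.mk (offRel D (stA D) (W.vP 0 hj)) (W.vP 0 hj, 0)
          = Quot.mk _ (D.θ (W.vP 0 hj, 0)) := omkθ _
        _ = Quot.mk _ (W.vR 0 hr, 1) := by rw [W.cP0 hj hr]
        _ = Quot.mk _ (W.vR 0 hr, 0) := (omk01 _ (W.vPR_ne 0 hj 0 hr).symm).symm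
        _ = Quot.mk _ (D.θ (W.vR 0 hr, 0)) := omkθ _
        _ = Quot.mk _ (W.vQ 0 hq, 1) := by rw [W.cR0 hr hq]
        _ = Quot.mk _ (W.vQ 0 hq, 0) := (omk01 _ (W.vPQ_ne 0 hj 0 hq).symm).symm
        _ = Quot.mk _ (D.θ (W.vQ 0 hq, 0)) := omkθ _
        _ = Quot.mk _ (W.vP 0 hj, 1) := by rw [W.cQ0 hq hj]
    · calc Quot.mk (offRel D (stA D) (W.vP j hj)) (W.vP j hj, 0)
          = Quot.mk _ (D.θ (W.vP j hj, 0)) := omkθ _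
        _ = Quot.mk _ (W.vP (j-1) (by omega), 3) := by
              rw [W.θP0 j (j-1) hj (by omega) (by omega)]
        _ = Quot.mk _ (W.vP (j-1) (by omega), 2) :=
              (omk23 _ (W.vPP_ne (j-1) (by omega) j hj (by omega))).symm
        _ = Quot.mk _ (D.θ (W.vP (j-1) (by omega), 2)) := omkθ _
        _ = Quot.mk _ (W.vP j hj, 1) := by
              rw [W.θP2 (j-1) j (by omega) hj (by omega)]
  · have hy : W.φ (Sum.inr (Sum.inl ⟨k, hk⟩)) = W.vQ k hk := rfl
    rw [hy]
    by_cases h0 : k = 0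
    · subst h0
      calc Quot.mk (offRel D (stA D) (W.vQ 0 hk)) (W.vQ 0 hk, 0)
          = Quot.mk _ (D.θ (W.vQ 0 hk, 0)) := omkθ _
        _ = Quot.mk _ (W.vP 0 hp, 1) := by rw [W.cQ0 hk hp]
        _ = Quot.mk _ (W.vP 0 hp, 0) := (omk01 _ (W.vPQ_ne 0 hp 0 hk)).symm
        _ = Quot.mk _ (D.θ (W.vP 0 hp, 0)) := omkθ _
        _ = Quot.mk _ (W.vR 0 hr, 1) := by rw [W.cP0 hp hr]
        _ = Quot.mk _ (W.vR 0 hr, 0) := (omk01 _ (W.vQR_ne 0 hk 0 hr).symm).symm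
        _ = Quot.mk _ (D.θ (W.vR 0 hr, 0)) := omkθ _
        _ = Quot.mk _ (W.vQ 0 hk, 1) := by rw [W.cR0 hr hk]
    · calc Quot.mk (offRel D (stA D) (W.vQ k hk)) (W.vQ k hk, 0)
          = Quot.mk _ (D.θ (W.vQ k hk, 0)) := omkθ _
        _ = Quot.mk _ (W.vQ (k-1) (by omega), 3) := by
              rw [W.θQ0 k (k-1) hk (by omega) (by omega)]
        _ = Quot.mk _ (W.vQ (k-1) (by omega), 2) :=
              (omk23 _ (W.vQQ_ne (k-1) (by omega) k hk (by omega))).symm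
        _ = Quot.mk _ (D.θ (W.vQ (k-1) (by omega), 2)) := omkθ _
        _ = Quot.mk _ (W.vQ k hk, 1) := by
              rw [W.θQ2 (k-1) k (by omega) hk (by omega)]
  · have hy : W.φ (Sum.inr (Sum.inr ⟨l, hl⟩)) = W.vR l hl := rfl
    rw [hy]
    by_cases h0 : l = 0
    · subst h0
      calc Quot.mk (offRel D (stA D) (W.vR 0 hl)) (W.vR 0 hl, 0)
          = Quot.mk _ (D.θ (W.vR 0 hl, 0)) := omkθ _
        _ = Quot.mk _ (W.vQ 0 hq, 1) := by rw [W.cR0 hl hq]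
        _ = Quot.mk _ (W.vQ 0 hq, 0) := (omk01 _ (W.vQR_ne 0 hq 0 hl)).symm
        _ = Quot.mk _ (D.θ (W.vQ 0 hq, 0)) := omkθ _
        _ = Quot.mk _ (W.vP 0 hp, 1) := by rw [W.cQ0 hq hp]
        _ = Quot.mk _ (W.vP 0 hp, 0) := (omk01 _ (W.vPR_ne 0 hp 0 hl)).symm
        _ = Quot.mk _ (D.θ (W.vP 0 hp, 0)) := omkθ _
        _ = Quot.mk _ (W.vR 0 hl, 1) := by rw [W.cP0 hp hl]
    · calc Quot.mk (offRel D (stA D) (W.vR l hl)) (W.vR l hl, 0)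
          = Quot.mk _ (D.θ (W.vR l hl, 0)) := omkθ _
        _ = Quot.mk _ (W.vR (l-1) (by omega), 3) := by
              rw [W.θR0 l (l-1) hl (by omega) (by omega)]
        _ = Quot.mk _ (W.vR (l-1) (by omega), 2) :=
              (omk23 _ (W.vRR_ne (l-1) (by omega) l hl (by omega))).symm
        _ = Quot.mk _ (D.θ (W.vR (l-1) (by omega), 2)) := omkθ _
        _ = Quot.mk _ (W.vR l hl, 1) := by
              rw [W.θR2 (l-1) l (by omega) hl (by omega)]

include W in
/-- likewise for the two ends of the upper arc at `x`. -/
theorem off_mk23 (x : D.X) :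
    Quot.mk (offRel D (stA D) x) (x, 2) = Quot.mk _ (x, 3) := by
  have hp := W.hp; have hq := W.hq; have hr := W.hr
  obtain ⟨z, rfl⟩ : ∃ z, x = W.φ z := ⟨W.φ.symm x, (W.φ.apply_symm_apply x).symm⟩
  rcases z with ⟨j, hj⟩ | ⟨k, hk⟩ | ⟨l, hl⟩
  · have hy : W.φ (Sum.inl ⟨j, hj⟩) = W.vP j hj := rfl
    rw [hy]
    by_cases h0 : j + 1 = p
    · rw [W.vP_congr (show j = p - 1 by omega) hj (by omega)]
      calc Quot.mk (offRel D (stA D) (W.vP (p-1) (by omega))) (W.vP (p-1) (by omega), 2)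
          = Quot.mk _ (D.θ (W.vP (p-1) (by omega), 2)) := omkθ _
        _ = Quot.mk _ (W.vQ (q-1) (by omega), 3) := by rw [W.cPt2 (by omega) (by omega)]
        _ = Quot.mk _ (W.vQ (q-1) (by omega), 2) :=
              (omk23 _ (W.vPQ_ne (p-1) (by omega) (q-1) (by omega)).symm).symm
        _ = Quot.mk _ (D.θ (W.vQ (q-1) (by omega), 2)) := omkθ _
        _ = Quot.mk _ (W.vR (r-1) (by omega), 3) := by rw [W.cQt2 (by omega) (by omega)]
        _ = Quot.mk _ (W.vR (r-1) (by omega), 2) :=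
              (omk23 _ (W.vPR_ne (p-1) (by omega) (r-1) (by omega)).symm).symm
        _ = Quot.mk _ (D.θ (W.vR (r-1) (by omega), 2)) := omkθ _
        _ = Quot.mk _ (W.vP (p-1) (by omega), 3) := by rw [W.cRt2 (by omega) (by omega)]
    · calc Quot.mk (offRel D (stA D) (W.vP j hj)) (W.vP j hj, 2)
          = Quot.mk _ (D.θ (W.vP j hj, 2)) := omkθ _
        _ = Quot.mk _ (W.vP (j+1) (by omega), 1) := by rw [W.θP2 j (j+1) hj (by omega) rfl]
        _ = Quot.mk _ (W.vP (j+1) (by omega), 0) :=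
              (omk01 _ (W.vPP_ne (j+1) (by omega) j hj (by omega))).symm
        _ = Quot.mk _ (D.θ (W.vP (j+1) (by omega), 0)) := omkθ _
        _ = Quot.mk _ (W.vP j hj, 3) := by rw [W.θP0 (j+1) j (by omega) hj rfl]
  · have hy : W.φ (Sum.inr (Sum.inl ⟨k, hk⟩)) = W.vQ k hk := rfl
    rw [hy]
    by_cases h0 : k + 1 = q
    · rw [W.vQ_congr (show k = q - 1 by omega) hk (by omega)]
      calc Quot.mk (offRel D (stA D) (W.vQ (q-1) (by omega))) (W.vQ (q-1) (by omega), 2)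
          = Quot.mk _ (D.θ (W.vQ (q-1) (by omega), 2)) := omkθ _
        _ = Quot.mk _ (W.vR (r-1) (by omega), 3) := by rw [W.cQt2 (by omega) (by omega)]
        _ = Quot.mk _ (W.vR (r-1) (by omega), 2) :=
              (omk23 _ (W.vQR_ne (q-1) (by omega) (r-1) (by omega)).symm).symm
        _ = Quot.mk _ (D.θ (W.vR (r-1) (by omega), 2)) := omkθ _
        _ = Quot.mk _ (W.vP (p-1) (by omega), 3) := by rw [W.cRt2 (by omega) (by omega)]
        _ = Quot.mk _ (W.vP (p-1) (by omega), 2) :=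
              (omk23 _ (W.vPQ_ne (p-1) (by omega) (q-1) (by omega))).symm
        _ = Quot.mk _ (D.θ (W.vP (p-1) (by omega), 2)) := omkθ _
        _ = Quot.mk _ (W.vQ (q-1) (by omega), 3) := by rw [W.cPt2 (by omega) (by omega)]
    · calc Quot.mk (offRel D (stA D) (W.vQ k hk)) (W.vQ k hk, 2)
          = Quot.mk _ (D.θ (W.vQ k hk, 2)) := omkθ _
        _ = Quot.mk _ (W.vQ (k+1) (by omega), 1) := by rw [W.θQ2 k (k+1) hk (by omega) rfl]
        _ = Quot.mk _ (W.vQ (k+1) (by omega), 0) :=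
              (omk01 _ (W.vQQ_ne (k+1) (by omega) k hk (by omega))).symm
        _ = Quot.mk _ (D.θ (W.vQ (k+1) (by omega), 0)) := omkθ _
        _ = Quot.mk _ (W.vQ k hk, 3) := by rw [W.θQ0 (k+1) k (by omega) hk rfl]
  · have hy : W.φ (Sum.inr (Sum.inr ⟨l, hl⟩)) = W.vR l hl := rfl
    rw [hy]
    by_cases h0 : l + 1 = r
    · rw [W.vR_congr (show l = r - 1 by omega) hl (by omega)]
      calc Quot.mk (offRel D (stA D) (W.vR (r-1) (by omega))) (W.vR (r-1) (by omega), 2)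
          = Quot.mk _ (D.θ (W.vR (r-1) (by omega), 2)) := omkθ _
        _ = Quot.mk _ (W.vP (p-1) (by omega), 3) := by rw [W.cRt2 (by omega) (by omega)]
        _ = Quot.mk _ (W.vP (p-1) (by omega), 2) :=
              (omk23 _ (W.vPR_ne (p-1) (by omega) (r-1) (by omega))).symm
        _ = Quot.mk _ (D.θ (W.vP (p-1) (by omega), 2)) := omkθ _
        _ = Quot.mk _ (W.vQ (q-1) (by omega), 3) := by rw [W.cPt2 (by omega) (by omega)]
        _ = Quot.mk _ (W.vQ (q-1) (by omega), 2) :=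
              (omk23 _ (W.vQR_ne (q-1) (by omega) (r-1) (by omega))).symm
        _ = Quot.mk _ (D.θ (W.vQ (q-1) (by omega), 2)) := omkθ _
        _ = Quot.mk _ (W.vR (r-1) (by omega), 3) := by rw [W.cQt2 (by omega) (by omega)]
    · calc Quot.mk (offRel D (stA D) (W.vR l hl)) (W.vR l hl, 2)
          = Quot.mk _ (D.θ (W.vR l hl, 2)) := omkθ _
        _ = Quot.mk _ (W.vR (l+1) (by omega), 1) := by rw [W.θR2 l (l+1) hl (by omega) rfl]
        _ = Quot.mk _ (W.vR (l+1) (by omega), 0) :=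
              (omk01 _ (W.vRR_ne (l+1) (by omega) l hl (by omega))).symm
        _ = Quot.mk _ (D.θ (W.vR (l+1) (by omega), 0)) := omkθ _
        _ = Quot.mk _ (W.vR l hl, 3) := by rw [W.θR0 (l+1) l (by omega) hl rfl]

include W in
theorem lev12_ne (x : D.X) : W.lev (x, 1) ≠ W.lev (x, 2) := by
  have hp := W.hp; have hq := W.hq; have hr := W.hr
  obtain ⟨z, rfl⟩ : ∃ z, x = W.φ z := ⟨W.φ.symm x, (W.φ.apply_symm_apply x).symm⟩
  rcases z with ⟨j, hj⟩ | ⟨k, hk⟩ | ⟨l, hl⟩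
  · have hy : W.φ (Sum.inl ⟨j, hj⟩) = W.vP j hj := rfl
    rw [hy, W.lev_vP, W.lev_vP, ind4_1, ind4_2]
    unfold labP
    split_ifs <;> first | contradiction | omega
  · have hy : W.φ (Sum.inr (Sum.inl ⟨k, hk⟩)) = W.vQ k hk := rfl
    rw [hy, W.lev_vQ, W.lev_vQ, ind4_1, ind4_2]
    unfold labQ
    split_ifs <;> first | contradiction | omega
  · have hy : W.φ (Sum.inr (Sum.inr ⟨l, hl⟩)) = W.vR l hl := rfl
    rw [hy, W.lev_vR, W.lev_vR, ind4_1, ind4_2]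
    unfold labR
    split_ifs <;> first | contradiction | omega

include W in
theorem off_ne12 (x : D.X) :
    Quot.mk (offRel D (stA D) x) (x, 1) ≠ Quot.mk (offRel D (stA D) x) (x, 2) := by
  intro h
  have hresp : ∀ a b, offRel D (stA D) x a b → W.lev a = W.lev b := by
    rintro a b (rfl | ⟨-, rfl⟩)
    · exact (W.lev_theta a).symm
    · exact (W.lev_smooth a).symm
  have := congrArg (Quot.lift W.lev hresp) h
  exact W.lev12_ne x this

include W in
/-- flipping one crossing of the all-A state to B merges two circles. -/
theorem card_circles_oneB (x : D.X) :
    nCircles D (Function.update (stA D) x true) = p + q + r - 2 := by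
  classical
  have hp := W.hp; have hq := W.hq; have hr := W.hr
  have hs1x : (Function.update (stA D) x true) x = true := Function.update_self x _ _
  have hoff : offRel D (Function.update (stA D) x true) x = offRel D (stA D) x :=
    offRel_congr D _ _ x (fun y hy => Function.update_of_ne hy _ _)
  have hB := nCircles_B D (Function.update (stA D) x true) x hs1x
  rw [hoff] at hB
  have hA := nCircles_A D (stA D) x rfl
  have hαβ : Quot.mk (offRel D (stA D) x) (x, 0) = Quot.mk _ (x, 1) := W.off_mk01 x
  have hγδ : Quot.mk (offRel D (stA D) x) (x, 2) = Quot.mk _ (x, 3) := W.off_mk23 x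
  have hβγ : Quot.mk (offRel D (stA D) x) (x, 1) ≠ Quot.mk _ (x, 2) := W.off_ne12 x
  rw [d2_eq_zero _ _ _ _ hαβ hγδ] at hA
  rw [d2_eq_one _ _ _ _ hαβ hβγ hγδ] at hB
  have hcA := W.card_circles_allA
  omega

include W in
theorem nCircles_le (s : D.X → Bool) (hs : s ≠ stA D) :
    nCircles D s + 2 ≤ (p + q + r) + (Finset.univ.filter fun y => s y = true).card := by
  classical
  have hp := W.hp; have hq := W.hq; have hr := W.hr
  suffices H : ∀ (m : ℕ) (s : D.X → Bool),
      (Finset.univ.filter fun y => s y = true).card = m → m ≠ 0 →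
      nCircles D s + 2 ≤ (p + q + r) + m by
    refine H _ s rfl ?_
    intro h0
    apply hs
    funext y
    have hy := Finset.filter_eq_empty_iff.mp (Finset.card_eq_zero.mp h0) (Finset.mem_univ y)
    simpa using hy
  intro m
  induction m with
  | zero => intro s hc h0; exact absurd rfl h0
  | succ m ih =>
    intro s hc _
    obtain ⟨x, hx⟩ : ∃ x, s x = true := by
      by_contra hno
      push_neg at hno
      have he : (Finset.univ.filter fun y => s y = true) = ∅ :=
        Finset.filter_eq_empty_iff.mpr (fun y _ => hno y)
      rw [he] at hc
      simp at hc
    have hupd : (Finset.univ.filter fun y => Function.update s x false y = true)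
        = (Finset.univ.filter fun y => s y = true).erase x := by
      ext y
      by_cases hyx : y = x
      · subst hyx; simp [Function.update_self]
      · simp [Function.update_of_ne hyx, hyx]
    have hc' : (Finset.univ.filter fun y => Function.update s x false y = true).card = m := by
      rw [hupd, Finset.card_erase_of_mem (by simp [hx]), hc]
      rfl
    have hflip := nCircles_flip_le D s x hx
    by_cases hm : m = 0
    · subst hm
      have hsA : Function.update s x false = stA D := by
        funext y
        have hy := Finset.filter_eq_empty_iff.mp (Finset.card_eq_zero.mp hc')
          (Finset.mem_univ y)
        simpa using hy
      have hsx : s = Function.update (stA D) x true := by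
        funext y
        by_cases hyx : y = x
        · subst hyx; rw [Function.update_self]; exact hx
        · rw [Function.update_of_ne hyx]
          have h2 : Function.update s x false y = stA D y := by rw [hsA]
          rw [Function.update_of_ne hyx] at h2
          exact h2
      rw [hsx, W.card_circles_oneB x]
      omega
    · have := ih (Function.update s x false) hc' hm
      omega

include W in
theorem nCircles_le_all (s : D.X → Bool) :
    nCircles D s + 1 ≤ (p + q + r) + (Finset.univ.filter fun y => s y = true).card := by
  have hp := W.hp; have hq := W.hq; have hr := W.hr
  by_cases hs : s = stA D
  · subst hs
    rw [W.card_circles_allA]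
    have h0 : (Finset.univ.filter fun y : D.X => stA D y = true).card = 0 := by
      simp
    omega
  · have := W.nCircles_le s hs
    omega

include W in
theorem cardX : Fintype.card D.X = p + q + r := by
  have h := Fintype.card_congr W.φ
  rw [← h]
  simp [add_assoc]

end PW

/-! ### Enhanced states and gradings -/

theorem card_subtype_bool_split {α : Type} [Finite α] (f : α → Bool) :
    Nat.card {x // f x = true} + Nat.card {x // f x = false} = Nat.card α := by
  classical
  letI : Fintype α := Fintype.ofFinite α
  rw [Nat.card_eq_fintype_card, Nat.card_eq_fintype_card, Nat.card_eq_fintype_card,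
    Fintype.card_subtype, Fintype.card_subtype]
  have h := Finset.card_filter_add_card_filter_not
    (s := (Finset.univ : Finset α)) (p := fun x => f x = true)
  rw [Finset.card_univ] at h
  have h2 : (Finset.filter (fun x => ¬ f x = true) Finset.univ)
      = Finset.filter (fun x => f x = false) Finset.univ := by
    ext x
    simp
  rw [← h, h2]

/-- the extreme enhanced state: all-A labels, all circles negative. -/
def eS0 (D : Diagram) : EState D := ⟨stA D, fun _ => false, fun _ _ _ => rfl⟩

theorem eS0_sgnQ (D : Diagram) (c : Circles D (eS0 D).st) : (eS0 D).sgnQ c = false := by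
  induction c using Quot.ind with | _ d => rfl

theorem eS0_nB (D : Diagram) : (eS0 D).nB = 0 := by
  unfold EState.nB
  rw [Finset.card_eq_zero, Finset.filter_eq_empty_iff]
  intro x _
  simp [eS0, stA]

theorem nPosNeg (D : Diagram) : D.nPos + D.nNeg = Fintype.card D.X := by
  classical
  unfold Diagram.nPos Diagram.nNeg
  have h := Finset.card_filter_add_card_filter_not
    (s := (Finset.univ : Finset D.X)) (p := fun x => D.posCr x = true)
  rw [Finset.card_univ] at h
  have h2 : (Finset.filter (fun x => ¬ D.posCr x = true) Finset.univ)
      = Finset.filter (fun x => D.posCr x = false) Finset.univ := by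
    ext x
    simp
  rw [← h, h2]

theorem tau_split (D : Diagram) (S : EState D) :
    Nat.card {c : Circles D S.st // S.sgnQ c = true}
      + Nat.card {c : Circles D S.st // S.sgnQ c = false} = nCircles D S.st :=
  card_subtype_bool_split S.sgnQ

namespace PW
variable {p q r : ℕ} {D : Diagram} (W : PW p q r D)

include W in
theorem jDeg_lower (S : EState D) : -3 * (D.nNeg : ℤ) + 1 ≤ S.jDeg := by
  have hc : nCircles D S.st + 1 ≤ (p + q + r) + S.nB := W.nCircles_le_all S.st
  have hT := tau_split D S
  have hN := W.cardX
  have hPN := nPosNeg D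
  unfold EState.jDeg EState.iDeg EState.tau Diagram.writhe
  omega

include W in
theorem jDeg_S0 : (eS0 D).jDeg = -3 * (D.nNeg : ℤ) + 1 := by
  have hp := W.hp; have hq := W.hq; have hr := W.hr
  have hN := W.cardX
  have hPN := nPosNeg D
  have hnB := eS0_nB D
  have hTrue : Nat.card {c : Circles D (eS0 D).st // (eS0 D).sgnQ c = true} = 0 := by
    haveI : IsEmpty {c : Circles D (eS0 D).st // (eS0 D).sgnQ c = true} :=
      ⟨fun ⟨c, hc⟩ => by rw [eS0_sgnQ D c] at hc; exact Bool.false_ne_true hc⟩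
    exact Nat.card_of_isEmpty
  have hFalse : Nat.card {c : Circles D (eS0 D).st // (eS0 D).sgnQ c = false}
      = p + q + r - 1 := by
    rw [Nat.card_congr (Equiv.subtypeUnivEquiv (eS0_sgnQ D))]
    exact W.card_circles_allA
  unfold EState.jDeg EState.iDeg EState.tau Diagram.writhe
  rw [hTrue, hFalse, hnB]
  push_cast [hN] at hPN ⊢
  omega

include W in
theorem jDeg_unique (S : EState D) (h : S.jDeg = -3 * (D.nNeg : ℤ) + 1) : S = eS0 D := by
  have hp := W.hp; have hq := W.hq; have hr := W.hr
  have hT := tau_split D S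
  have hN := W.cardX
  have hPN := nPosNeg D
  by_cases hsA : S.st = stA D
  · have hnB0 : S.nB = 0 := by
      unfold EState.nB
      rw [Finset.card_eq_zero, Finset.filter_eq_empty_iff]
      intro x _
      rw [hsA]
      simp
    have hcA : nCircles D S.st = p + q + r - 1 := by
      rw [hsA]; exact W.card_circles_allA
    have hTrue0 : Nat.card {c : Circles D S.st // S.sgnQ c = true} = 0 := by
      unfold EState.jDeg EState.iDeg EState.tau Diagram.writhe at h
      omega
    have hsgn : ∀ c : Circles D S.st, S.sgnQ c = false := by
      haveI hfin : Finite {c : Circles D S.st // S.sgnQ c = true} := Subtype.finite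
      haveI he : IsEmpty {c : Circles D S.st // S.sgnQ c = true} := by
        rcases Nat.card_eq_zero.mp hTrue0 with he | hinf
        · exact he
        · haveI := hinf
          exact (not_finite {c : Circles D S.st // S.sgnQ c = true}).elim
      intro c
      rcases hb : S.sgnQ c with _ | _
      · rfl
      · exact he.elim ⟨c, hb⟩
    obtain ⟨st, sgn, const⟩ := S
    have hst : st = stA D := hsA
    subst hst
    have hsg : sgn = fun _ => false := by
      funext d
      exact hsgn (Quot.mk _ d)
    subst hsg
    rfl
  · exfalso
    have hc : nCircles D S.st + 2 ≤ (p + q + r) + S.nB := W.nCircles_le S.st hsA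
    unfold EState.jDeg EState.iDeg EState.tau Diagram.writhe at h
    omega

end PW

/-! ### Assembly of the homology computation -/

theorem KH_subsingleton_of_grade_bot (D : Diagram) (i j : ℤ) (h : khGrade D i j = ⊥) :
    Subsingleton (KH D i j) := by
  have hcyc : khCycles D i j = ⊥ := by
    unfold khCycles
    rw [h, inf_bot_eq]
  haveI h1 : Subsingleton ↥(khCycles D i j) := by rw [hcyc]; infer_instance
  show Subsingleton
    (↥(khCycles D i j) ⧸ Submodule.comap (khCycles D i j).subtype (khBoundaries D i j))
  exact (Submodule.mkQ_surjective _).subsingleton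

theorem khGrade_eq_bot (D : Diagram) (i j : ℤ)
    (h : ∀ S : EState D, ¬ (S.iDeg = i ∧ S.jDeg = j)) : khGrade D i j = ⊥ := by
  unfold khGrade
  have hset : {S : EState D | S.iDeg = i ∧ S.jDeg = j} = ∅ := by
    ext S
    simpa using h S
  rw [hset]
  exact Finsupp.supported_empty

/-- For all positive integers `p`, `q`, `r`, the real-extreme Khovanov
homology of the pretzel link `P(-p,-q,-r)` sits in quantum grading `j̲ = -3n+1` and is `ℤ`
in homological grading `i = -n` and trivial in all other homological gradings, where `n`
is the number of negative crossings of the (oriented) standard diagram. -/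
theorem realExtremeKH_pretzel_mmm (p q r : ℕ) (hp : 0 < p) (hq : 0 < q) (hr : 0 < r)
    (D : Diagram) (hD : IsStdPretzel false false false p q r hp hq hr D) :
    IsRealExtremeGrading D (-3 * (D.nNeg : ℤ) + 1) ∧
    Nonempty (KH D (-(D.nNeg : ℤ)) (-3 * (D.nNeg : ℤ) + 1) ≃+ ℤ) ∧
    (∀ i : ℤ, i ≠ -(D.nNeg : ℤ) →
      Subsingleton (KH D i (-3 * (D.nNeg : ℤ) + 1))) := by
  classical
  obtain ⟨φ, tP, tQ, tR, e1, e2, e3, e4, e5, e6⟩ := hD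
  let W : PW p q r D := ⟨hp, hq, hr, φ, tP, tQ, tR, e1, e2, e3, e4, e5, e6⟩
  set n : ℤ := (D.nNeg : ℤ) with hn
  set j0 : ℤ := -3 * (D.nNeg : ℤ) + 1 with hj0
  have hS0j : (eS0 D).jDeg = j0 := W.jDeg_S0
  have huniq : ∀ S : EState D, S.jDeg = j0 → S = eS0 D := fun S h => W.jDeg_unique S h
  have hlow : ∀ S : EState D, j0 ≤ S.jDeg := fun S => W.jDeg_lower S
  have hS0i : (eS0 D).iDeg = -n := by
    unfold EState.iDeg
    rw [eS0_nB D]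
    simp [hn]
  -- the grade set at (-n, j0)
  have hset : {S : EState D | S.iDeg = -n ∧ S.jDeg = j0} = {eS0 D} := by
    ext S
    constructor
    · rintro ⟨-, h2⟩
      exact huniq S h2
    · rintro rfl
      exact ⟨hS0i, hS0j⟩
  have hgr : khGrade D (-n) j0 = Finsupp.supported ℤ ℤ ({eS0 D} : Set (EState D)) := by
    unfold khGrade
    rw [hset]
  -- all other grades at quantum grading ≤ j0 vanish
  have hbot1 : ∀ i : ℤ, i ≠ -n → khGrade D i j0 = ⊥ := by
    intro i hi
    refine khGrade_eq_bot D i j0 ?_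
    rintro S ⟨h1, h2⟩
    rw [huniq S h2] at h1
    exact hi (by rw [← h1, hS0i])
  have hbot2 : ∀ j' : ℤ, j' < j0 → ∀ i : ℤ, khGrade D i j' = ⊥ := by
    intro j' hj' i
    refine khGrade_eq_bot D i j' ?_
    rintro S ⟨-, h2⟩
    exact absurd (h2 ▸ hlow S) (not_le.mpr hj')
  -- incidence numbers out of the extreme state vanish
  have hz : ∀ T : EState D, incNum (eS0 D) T = 0 := by
    intro T
    unfold incNum
    rw [if_neg]
    rintro ⟨x, hx0, hx1, -, hj, -⟩
    have hT : T = eS0 D := huniq T (by rw [hj, hS0j])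
    rw [hT] at hx1
    exact Bool.false_ne_true hx1
  -- the grade at (-n, j0) consists of cycles
  have hker : khGrade D (-n) j0 ≤ LinearMap.ker (khDiff D) := by
    intro f hf
    have hf' : f ∈ Finsupp.supported ℤ ℤ ({eS0 D} : Set (EState D)) := hgr ▸ hf
    rw [Finsupp.mem_supported] at hf'
    have hsub : f.support ⊆ {eS0 D} := by
      intro a ha
      have := hf' ha
      simpa using this
    have hf2 : f = Finsupp.single (eS0 D) (f (eS0 D)) :=
      Finsupp.support_subset_singleton.mp hsub
    rw [LinearMap.mem_ker, hf2]
    unfold khDiff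
    rw [Finsupp.linearCombination_single]
    have hzero : (∑ T : EState D, Finsupp.single T (incNum (eS0 D) T)) = 0 := by
      refine Finset.sum_eq_zero ?_
      intro T _
      rw [hz T, Finsupp.single_zero]
    rw [hzero, smul_zero]
  have hcyc_eq : khCycles D (-n) j0 = khGrade D (-n) j0 :=
    le_antisymm inf_le_right (le_inf hker le_rfl)
  have hbound : khBoundaries D (-n) j0 = ⊥ := by
    unfold khBoundaries
    rw [hbot1 (-n - 1) (by omega), Submodule.map_bot]
  -- the isomorphism with ℤ
  have hcomap : Submodule.comap (khCycles D (-n) j0).subtype (khBoundaries D (-n) j0) = ⊥ := by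
    rw [hbound, Submodule.comap_bot, Submodule.ker_subtype]
  haveI : Unique ↥({eS0 D} : Set (EState D)) := Set.uniqueSingleton _
  have eqv : KH D (-n) j0 ≃+ ℤ := by
    have e1 : KH D (-n) j0 ≃ₗ[ℤ] ↥(khCycles D (-n) j0) :=
      Submodule.quotEquivOfEqBot _ hcomap
    have e2 : ↥(khCycles D (-n) j0) ≃ₗ[ℤ]
        ↥(Finsupp.supported ℤ ℤ ({eS0 D} : Set (EState D))) :=
      LinearEquiv.ofEq _ _ (hcyc_eq.trans hgr)
    have e3 := Finsupp.supportedEquivFinsupp (R := ℤ) (M := ℤ) ({eS0 D} : Set (EState D))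
    have e4 := Finsupp.LinearEquiv.finsuppUnique ℤ ℤ ↥({eS0 D} : Set (EState D))
    exact (e1.trans (e2.trans (e3.trans e4))).toAddEquiv
  have hnontriv : Nontrivial (KH D (-n) j0) := eqv.toEquiv.nontrivial
  refine ⟨⟨⟨-n, hnontriv⟩, ?_⟩, ⟨eqv⟩, ?_⟩
  · intro j' hj' i
    rw [not_nontrivial_iff_subsingleton]
    exact KH_subsingleton_of_grade_bot D i j' (hbot2 j' hj' i)
  · intro i hi
    exact KH_subsingleton_of_grade_bot D i j0 (hbot1 i hi)

end
end
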